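/- arXiv:1808.10659 — 7 statements merged into one kernel-verified Lean document; each statement's English description precedes it below -/
import Mathlib

section
/- Let 0 < p < 1 and p < q ≤ 1, and let β = (q/p)/((q/p) − 1) be the conjugate exponent of q/p. Define the map ψ on real sequences by ψ(z)_k = |z_k|^{1/p}·sgn(z_k). Then ψ maps ℓ^{q/p} into ℓ^{β}, and ψ is weakly sequentially continuous: if (z^n) is a sequence in ℓ^{q/p} converging weakly to z̄ ∈ ℓ^{q/p}, then ψ(z^n) converges weakly to ψ(z̄) in ℓ^{β}. -/
/-- `z` belongs to `ℓ^s`: the series `Σ_k |z_k|^s` converges. -/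
def MemLp' (s : ℝ) (z : ℕ → ℝ) : Prop :=
  Summable fun k => |z k| ^ s

/-- Weak convergence in `ℓ^s`: testing against every element of the dual `ℓ^{s/(s-1)}`. -/
def WeakConvLp (s : ℝ) (zn : ℕ → ℕ → ℝ) (zb : ℕ → ℝ) : Prop :=
  ∀ v : ℕ → ℝ, MemLp' (s / (s - 1)) v →
    Filter.Tendsto (fun n => ∑' k, v k * zn n k) Filter.atTop (nhds (∑' k, v k * zb k))

/-- The reparametrization map `ψ(z)_k = |z_k|^{1/p} · sgn(z_k)`. -/
noncomputable def psi (p : ℝ) (z : ℕ → ℝ) : ℕ → ℝ :=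
  fun k => |z k| ^ (1 / p) * Real.sign (z k)

/-!
With `s = q/p` and `β` its conjugate exponent, `|ψ(z)_k|^β = |z_k|^(β/p)` and
`β/p = s/(q-p) ≥ s`, so `ψ` maps `ℓ^s` into `ℓ^β`, boundedly on bounded sets. A weakly
convergent sequence in `ℓ^s` is bounded (uniform boundedness) and converges coordinatewise.
As `ψ` acts coordinatewise and continuously, `ψ(z^n)` is then bounded in `ℓ^β` and converges
coordinatewise to `ψ(z̄)`, which implies weak convergence: the pairing with `v ∈ ℓ^s` splits into
a finite sum, which converges, and a tail that Hölder's inequality makes uniformly small.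
-/

open Filter Topology

lemma Real.sign_mul_self_eq_abs (x : ℝ) : Real.sign x * x = |x| := by
  rcases lt_trichotomy x 0 with hx | rfl | hx
  · rw [Real.sign_of_neg hx, abs_of_neg hx, neg_one_mul]
  · simp
  · rw [Real.sign_of_pos hx, abs_of_pos hx, one_mul]

noncomputable def signedRpow (x a : ℝ) : ℝ :=
  |x| ^ a * Real.sign x

lemma abs_signedRpow {a : ℝ} (ha : a ≠ 0) (x : ℝ) : |signedRpow x a| = |x| ^ a := by
  rcases lt_trichotomy x 0 with hx | rfl | hx
  · simp [signedRpow, Real.sign_of_neg hx, abs_of_nonneg (Real.rpow_nonneg (abs_nonneg x) a)]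
  · simp [signedRpow, Real.zero_rpow ha]
  · simp [signedRpow, Real.sign_of_pos hx, abs_of_nonneg (Real.rpow_nonneg (abs_nonneg x) a)]

lemma signedRpow_mul_self {a : ℝ} (ha : a + 1 ≠ 0) (x : ℝ) :
    signedRpow x a * x = |x| ^ (a + 1) := by
  rw [signedRpow, mul_assoc, Real.sign_mul_self_eq_abs, Real.rpow_add_one' (abs_nonneg x) ha]

lemma signedRpow_eq_ite {a : ℝ} (ha : 0 < a) (x : ℝ) :
    signedRpow x a = if 0 ≤ x then x ^ a else -(-x) ^ a := by
  rcases lt_trichotomy x 0 with hx | rfl | hx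
  · simp [signedRpow, hx.not_ge, Real.sign_of_neg hx, abs_of_neg hx]
  · simp [signedRpow, Real.zero_rpow ha.ne']
  · simp [signedRpow, hx.le, Real.sign_of_pos hx, abs_of_pos hx]

lemma continuous_signedRpow {a : ℝ} (ha : 0 < a) : Continuous fun x => signedRpow x a := by
  simp_rw [signedRpow_eq_ite ha]
  refine Continuous.if_le ?_ ?_ continuous_const continuous_id fun x hx => ?_
  · exact continuous_id.rpow_const fun _ => Or.inr ha.le
  · exact (continuous_neg.rpow_const fun _ => Or.inr ha.le).neg
  · simp [← hx, Real.zero_rpow ha.ne']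

lemma psi_apply (p : ℝ) (z : ℕ → ℝ) (k : ℕ) : psi p z k = signedRpow (z k) (1 / p) := rfl

lemma abs_psi_rpow {p : ℝ} (hp : p ≠ 0) (z : ℕ → ℝ) (k : ℕ) (t : ℝ) :
    |psi p z k| ^ t = |z k| ^ (t / p) := by
  rw [psi_apply, abs_signedRpow (one_div_ne_zero hp), ← Real.rpow_mul (abs_nonneg _),
    one_div_mul_eq_div]

section Holder

variable {r r' : ℝ} {v w : ℕ → ℝ}

lemma MemLp'.summable_mul (hrr' : r.HolderConjugate r') (hv : MemLp' r v) (hw : MemLp' r' w) :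
    Summable fun k => v k * w k :=
  Summable.of_abs <| by
    simpa only [abs_mul] using (Real.summable_and_inner_le_Lp_mul_Lq_tsum_of_nonneg hrr'
      (fun k => abs_nonneg (v k)) (fun k => abs_nonneg (w k)) hv hw).1

lemma MemLp'.abs_tsum_mul_le (hrr' : r.HolderConjugate r') (hv : MemLp' r v) (hw : MemLp' r' w) :
    |∑' k, v k * w k| ≤ (∑' k, |v k| ^ r) ^ (1 / r) * (∑' k, |w k| ^ r') ^ (1 / r') := by
  obtain ⟨hsum, hle⟩ := Real.summable_and_inner_le_Lp_mul_Lq_tsum_of_nonneg hrr'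
    (fun k => abs_nonneg (v k)) (fun k => abs_nonneg (w k)) hv hw
  calc |∑' k, v k * w k| ≤ ∑' k, |v k * w k| := by
        simpa only [Real.norm_eq_abs] using norm_tsum_le_tsum_norm (f := fun k => v k * w k)
          (by simpa only [Real.norm_eq_abs, abs_mul] using hsum)
    _ = ∑' k, |v k| * |w k| := by simp only [abs_mul]
    _ ≤ _ := hle

end Holder

section Inclusion

variable {s t M : ℝ} {z : ℕ → ℝ}

lemma MemLp'.nat_add (hz : MemLp' s z) (K : ℕ) : MemLp' s fun j => z (j + K) :=
  (summable_nat_add_iff K).2 hz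

lemma MemLp'.tsum_nat_add_le (hz : MemLp' s z) (K : ℕ) :
    ∑' j, |z (j + K)| ^ s ≤ ∑' k, |z k| ^ s := by
  rw [← hz.sum_add_tsum_nat_add K]
  exact le_add_of_nonneg_left (Finset.sum_nonneg fun k _ => by positivity)

lemma MemLp'.abs_le (hs : 0 < s) (hz : MemLp' s z) (hM : (∑' k, |z k| ^ s) ^ (1 / s) ≤ M)
    (k : ℕ) : |z k| ≤ M := by
  refine le_trans ?_ hM
  calc |z k| = (|z k| ^ s) ^ (1 / s) := by
        rw [← Real.rpow_mul (abs_nonneg _), mul_one_div_cancel hs.ne', Real.rpow_one]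
    _ ≤ _ := by
        gcongr
        exact hz.le_tsum k fun j _ => by positivity

lemma rpow_le_mul_rpow_of_le {x : ℝ} (hx : 0 ≤ x) (hs : 0 < s) (hst : s ≤ t) (hxM : x ≤ M) :
    x ^ t ≤ M ^ (t - s) * x ^ s := by
  calc x ^ t = x ^ (t - s) * x ^ s := by rw [← Real.rpow_add' hx (by linarith), sub_add_cancel]
    _ ≤ M ^ (t - s) * x ^ s := by gcongr

lemma MemLp'.of_exponent_le (hs : 0 < s) (hst : s ≤ t) (hz : MemLp' s z) : MemLp' t z :=
  Summable.of_nonneg_of_le (fun k => by positivity)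
    (fun k => rpow_le_mul_rpow_of_le (abs_nonneg _) hs hst (hz.abs_le hs le_rfl k)) (hz.mul_left _)

lemma MemLp'.tsum_rpow_le_of_exponent_le (hs : 0 < s) (hst : s ≤ t) (hz : MemLp' s z)
    (hM : (∑' k, |z k| ^ s) ^ (1 / s) ≤ M) : ∑' k, |z k| ^ t ≤ M ^ t := by
  have hA : 0 ≤ ∑' k, |z k| ^ s := tsum_nonneg fun k => by positivity
  have hM0 : 0 ≤ M := (Real.rpow_nonneg hA _).trans hM
  have hAM : ∑' k, |z k| ^ s ≤ M ^ s := by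
    calc ∑' k, |z k| ^ s = ((∑' k, |z k| ^ s) ^ (1 / s)) ^ s := by
          rw [← Real.rpow_mul hA, one_div_mul_cancel hs.ne', Real.rpow_one]
      _ ≤ M ^ s := by gcongr
  calc ∑' k, |z k| ^ t ≤ ∑' k, M ^ (t - s) * |z k| ^ s :=
        (hz.of_exponent_le hs hst).tsum_le_tsum
          (fun k => rpow_le_mul_rpow_of_le (abs_nonneg _) hs hst (hz.abs_le hs hM k))
          (hz.mul_left _)
    _ = M ^ (t - s) * ∑' k, |z k| ^ s := tsum_mul_left
    _ ≤ M ^ (t - s) * M ^ s := by gcongr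
    _ = M ^ t := by rw [← Real.rpow_add' hM0 (by linarith), sub_add_cancel]

end Inclusion

section Duality

variable {s : ℝ} {zn : ℕ → ℕ → ℝ} {zb : ℕ → ℝ}

lemma MemLp'.tsum_rpow_le_of_abs_tsum_mul_le {s' C : ℝ} {z : ℕ → ℝ} (hss' : s.HolderConjugate s')
    (hz : MemLp' s z) (hC0 : 0 ≤ C)
    (hC : ∀ v, MemLp' s' v → |∑' k, v k * z k| ≤ C * (∑' k, |v k| ^ s') ^ (1 / s')) :
    (∑' k, |z k| ^ s) ^ (1 / s) ≤ C := by
  rcases (tsum_nonneg fun k => by positivity : 0 ≤ ∑' k, |z k| ^ s).eq_or_lt with hA | hA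
  · rw [← hA, Real.zero_rpow hss'.one_div_ne_zero]
    exact hC0
  -- test against the norming sequence `|z|^(s-1) sgn z`, whose `s'`-th power is `|z|^s`
  have hw : ∀ k, |signedRpow (z k) (s - 1)| ^ s' = |z k| ^ s := fun k => by
    rw [abs_signedRpow hss'.sub_one_ne_zero, ← Real.rpow_mul (abs_nonneg _),
      hss'.sub_one_mul_conj]
  have hpair : ∑' k, signedRpow (z k) (s - 1) * z k = ∑' k, |z k| ^ s := tsum_congr fun k => by
    rw [signedRpow_mul_self (by simpa using hss'.ne_zero), sub_add_cancel]
  have key := hC (fun k => signedRpow (z k) (s - 1)) (by simpa only [MemLp', hw] using hz)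
  rw [hpair, abs_of_pos hA, tsum_congr hw] at key
  rw [← mul_le_mul_iff_of_pos_right (Real.rpow_pos_of_pos hA (1 / s')), ← Real.rpow_add hA,
    hss'.one_div_add_one_div, one_div_one, Real.rpow_one]
  exact key

lemma memLp'_iff_memℓp (hs : 0 < s) {z : ℕ → ℝ} : MemLp' s z ↔ Memℓp z (ENNReal.ofReal s) := by
  rw [memℓp_gen_iff (by rwa [ENNReal.toReal_ofReal hs.le]), ENNReal.toReal_ofReal hs.le]
  rfl

lemma lp.norm_eq_tsum_abs_rpow (hs : 0 < s) (f : lp (fun _ : ℕ => ℝ) (ENNReal.ofReal s)) :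
    ‖f‖ = (∑' k, |f k| ^ s) ^ (1 / s) := by
  rw [lp.norm_eq_tsum_rpow (by rwa [ENNReal.toReal_ofReal hs.le]), ENNReal.toReal_ofReal hs.le]
  rfl

lemma WeakConvLp.exists_norm_le (hs : 1 < s) (hzn : ∀ n, MemLp' s (zn n)) (h : WeakConvLp s zn zb) :
    ∃ M, ∀ n, (∑' k, |zn n k| ^ s) ^ (1 / s) ≤ M := by
  set s' := s / (s - 1)
  have hss' : s.HolderConjugate s' := .conjExponent hs
  have : Fact (1 ≤ ENNReal.ofReal s) := ⟨ENNReal.one_le_ofReal.2 hs.le⟩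
  have : Fact (1 ≤ ENNReal.ofReal s') := ⟨ENNReal.one_le_ofReal.2 hss'.symm.lt.le⟩
  have := hss'.symm.ennrealOfReal
  let T : ℕ → lp (fun _ : ℕ => ℝ) (ENNReal.ofReal s') →L[ℝ] ℝ := fun n =>
    (lp.dualPairing _ _ (fun _ => ContinuousLinearMap.mul ℝ ℝ) (K := 1)
      fun _ => ContinuousLinearMap.opNorm_mul_le ℝ ℝ).flip
      ⟨zn n, (memLp'_iff_memℓp hss'.pos).1 (hzn n)⟩
  have hT : ∀ n v, T n v = ∑' k, v k * zn n k := fun n v => rfl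
  obtain ⟨C, hC⟩ := banach_steinhaus (g := T) fun v => by
    obtain ⟨c, hc⟩ := (h v ((memLp'_iff_memℓp hss'.symm.pos).2 v.2)).norm.bddAbove_range
    exact ⟨c, fun n => by simpa only [hT] using hc ⟨n, rfl⟩⟩
  refine ⟨C, fun n => (hzn n).tsum_rpow_le_of_abs_tsum_mul_le hss'
    ((norm_nonneg _).trans (hC 0)) fun v hv => ?_⟩
  have hle := (T n).le_of_opNorm_le (hC n) ⟨v, (memLp'_iff_memℓp hss'.symm.pos).1 hv⟩
  rwa [hT, lp.norm_eq_tsum_abs_rpow hss'.symm.pos, Real.norm_eq_abs] at hle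

lemma WeakConvLp.tendsto_apply (hs : 1 < s) (h : WeakConvLp s zn zb) (k : ℕ) :
    Tendsto (fun n => zn n k) atTop (𝓝 (zb k)) := by
  have hs' : s / (s - 1) ≠ 0 := (Real.HolderConjugate.conjExponent hs).symm.ne_zero
  have hsingle : MemLp' (s / (s - 1)) (Pi.single k 1) := by
    refine summable_of_ne_finset_zero (s := {k}) fun j hj => ?_
    rw [Pi.single_eq_of_ne (by simpa using hj), abs_zero, Real.zero_rpow hs']
  simpa [Pi.single_apply] using h _ hsingle

end Duality

section Coordinatewise

variable {r r' B : ℝ} {v w : ℕ → ℝ}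

lemma MemLp'.abs_tsum_mul_nat_add_le (hrr' : r.HolderConjugate r') (hv : MemLp' r v)
    (hw : MemLp' r' w) (hB : ∑' k, |w k| ^ r' ≤ B) (K : ℕ) :
    |∑' j, v (j + K) * w (j + K)| ≤ (∑' j, |v (j + K)| ^ r) ^ (1 / r) * B ^ (1 / r') := by
  refine ((hv.nat_add K).abs_tsum_mul_le hrr' (hw.nat_add K)).trans ?_
  have h1r' := hrr'.symm.one_div_nonneg
  gcongr
  exact (hw.tsum_nat_add_le K).trans hB

lemma weakConvLp_of_tendsto_apply (hr' : 1 < r') {w : ℕ → ℕ → ℝ} {wb : ℕ → ℝ}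
    (hw : ∀ n, MemLp' r' (w n)) (hB : ∀ n, ∑' k, |w n k| ^ r' ≤ B) (hwb : MemLp' r' wb)
    (hlim : ∀ k, Tendsto (fun n => w n k) atTop (𝓝 (wb k))) :
    WeakConvLp r' w wb := by
  intro v hv
  set r := r' / (r' - 1)
  have hrr' : r.HolderConjugate r' := (Real.HolderConjugate.conjExponent hr').symm
  -- the partial sums of the pairings converge uniformly in `n`, by the uniform tail bound
  refine TendstoUniformly.tendsto_of_eventually_tendsto
    (F := fun K n => ∑ k ∈ Finset.range K, v k * w n k) ?_
    (Eventually.of_forall fun K => tendsto_finsetSum _ fun k _ => (hlim k).const_mul (v k))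
    (hv.summable_mul hrr' hwb).hasSum.tendsto_sum_nat
  rw [Metric.tendstoUniformly_iff]
  intro ε hε
  have htail : Tendsto (fun K => (∑' j, |v (j + K)| ^ r) ^ (1 / r) * B ^ (1 / r')) atTop (𝓝 0) := by
    have := ((tendsto_sum_nat_add fun k => |v k| ^ r).rpow_const
      (Or.inr hrr'.one_div_nonneg)).mul_const (B ^ (1 / r'))
    rwa [Real.zero_rpow hrr'.one_div_ne_zero, zero_mul] at this
  filter_upwards [htail.eventually (gt_mem_nhds hε)] with K hK n
  rw [Real.dist_eq, ← (hv.summable_mul hrr' (hw n)).sum_add_tsum_nat_add K, add_sub_cancel_left]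
  exact (hv.abs_tsum_mul_nat_add_le hrr' (hw n) (hB n) K).trans_lt hK

end Coordinatewise

section Psi

variable {p s β M : ℝ} {z : ℕ → ℝ}

lemma MemLp'.tsum_abs_psi_rpow_le (hp : 0 < p) (hs : 0 < s) (hsβ : s ≤ β / p) (hz : MemLp' s z)
    (hM : (∑' k, |z k| ^ s) ^ (1 / s) ≤ M) : ∑' k, |psi p z k| ^ β ≤ M ^ (β / p) := by
  simpa only [abs_psi_rpow hp.ne'] using hz.tsum_rpow_le_of_exponent_le hs hsβ hM

lemma MemLp'.psi (hp : 0 < p) (hs : 0 < s) (hsβ : s ≤ β / p) (hz : MemLp' s z) :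
    MemLp' β (psi p z) := by
  simpa only [MemLp', abs_psi_rpow hp.ne'] using hz.of_exponent_le hs hsβ

lemma tendsto_psi_apply (hp : 0 < p) {zn : ℕ → ℕ → ℝ} {zb : ℕ → ℝ}
    (h : ∀ k, Tendsto (fun n => zn n k) atTop (𝓝 (zb k))) (k : ℕ) :
    Tendsto (fun n => psi p (zn n) k) atTop (𝓝 (psi p zb k)) :=
  ((continuous_signedRpow (one_div_pos.2 hp)).tendsto _).comp (h k)

end Psi

theorem psi_weakly_sequentially_continuous_general
    (p q β : ℝ) (hp0 : 0 < p) (hpq : p < q) (hq1 : q ≤ 1)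
    (hβ : β = (q / p) / (q / p - 1))
    (zn : ℕ → ℕ → ℝ) (zb : ℕ → ℝ)
    (hzn : ∀ n, MemLp' (q / p) (zn n)) (hzb : MemLp' (q / p) zb)
    (hconv : WeakConvLp (q / p) zn zb) :
    (∀ z : ℕ → ℝ, MemLp' (q / p) z → MemLp' β (psi p z)) ∧
    WeakConvLp β (fun n => psi p (zn n)) (psi p zb) := by
  have hs : 1 < q / p := (one_lt_div hp0).2 hpq
  have hsβ : (q / p).HolderConjugate β := hβ ▸ .conjExponent hs
  have hsβp : q / p ≤ β / p := by
    have hβp : β / p = q / p / (q - p) := by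
      rw [hβ]
      field_simp
    rw [hβp]
    exact le_div_self hsβ.nonneg (by linarith) (by linarith)
  refine ⟨fun z hz => hz.psi hp0 hsβ.pos hsβp, ?_⟩
  obtain ⟨M, hM⟩ := hconv.exists_norm_le hs hzn
  exact weakConvLp_of_tendsto_apply hsβ.symm.lt (fun n => (hzn n).psi hp0 hsβ.pos hsβp)
    (fun n => (hzn n).tsum_abs_psi_rpow_le hp0 hsβ.pos hsβp (hM n)) (hzb.psi hp0 hsβ.pos hsβp)
    (tendsto_psi_apply hp0 (hconv.tendsto_apply hs))

/-- for `0 < p < 1`, `p < q ≤ 1` and `β` the conjugate exponent of `q/p`,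
the map `ψ` sends `ℓ^{q/p}` into `ℓ^β` and is weakly sequentially continuous. -/
theorem psi_weakly_sequentially_continuous
    (p q β : ℝ) (hp0 : 0 < p) (hp1 : p < 1) (hpq : p < q) (hq1 : q ≤ 1)
    (hβ : β = (q / p) / (q / p - 1))
    (zn : ℕ → ℕ → ℝ) (zb : ℕ → ℝ)
    (hzn : ∀ n, MemLp' (q / p) (zn n)) (hzb : MemLp' (q / p) zb)
    (hconv : WeakConvLp (q / p) zn zb) :
    (∀ z : ℕ → ℝ, MemLp' (q / p) z → MemLp' β (psi p z)) ∧
    WeakConvLp β (fun n => psi p (zn n)) (psi p zb) :=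
  psi_weakly_sequentially_continuous_general p q β hp0 hpq hq1 hβ zn zb hzn hzb hconv
end

section
/- Let 0 < q < 1, γ > 0, ρ > 0 and φ ∈ ℝ with φ ≠ 0 and |φ|·ρ^{1−q} = γ. Then φ·u + γ·|u|^q ≥ 0 for every u ∈ [−ρ, ρ], and equality holds exactly for u ∈ {0, −ρ·sgn(φ)}; that is, the minimum value of u ↦ φ·u + γ·|u|^q on [−ρ, ρ] is 0 and it is attained exactly at 0 and at −ρ·sgn(φ). -/
/-- if `0 < q < 1`, `γ > 0`, `ρ > 0`, `φ ≠ 0` and `|φ| ρ^{1-q} = γ`, then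
`φ u + γ |u|^q ≥ 0` on `[-ρ, ρ]`, with equality exactly at `u = 0` and
`u = -ρ sgn(φ)`. -/
theorem borderline_minimizers
    (q γ ρ φ : ℝ) (hq0 : 0 < q) (hq1 : q < 1) (hγ : 0 < γ) (hρ : 0 < ρ)
    (hφ0 : φ ≠ 0) (heq : |φ| * ρ ^ (1 - q) = γ) :
    ∀ u ∈ Set.Icc (-ρ) ρ,
      0 ≤ φ * u + γ * |u| ^ q ∧
      (φ * u + γ * |u| ^ q = 0 ↔ u = 0 ∨ u = -ρ * Real.sign φ) := by
  intro u hu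
  have habs : |u| ≤ ρ := abs_le.mpr ⟨hu.1, hu.2⟩
  have hφpos : 0 < |φ| := abs_pos.mpr hφ0
  have hsplit : |u| = |u| ^ q * |u| ^ (1 - q) := by
    have h := Real.rpow_add' (abs_nonneg u) (y := q) (z := 1 - q) (by norm_num)
    simpa using h
  have h1 : |u| ^ (1 - q) ≤ ρ ^ (1 - q) :=
    Real.rpow_le_rpow (abs_nonneg u) habs (by linarith)
  have huq : (0:ℝ) ≤ |u| ^ q := Real.rpow_nonneg (abs_nonneg u) q
  -- decomposition
  have hdecomp : φ * u + γ * |u| ^ q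
      = (φ * u + |φ| * |u|) + |φ| * |u| ^ q * (ρ ^ (1 - q) - |u| ^ (1 - q)) := by
    rw [← heq]
    nlinarith [hsplit]
  have hA : 0 ≤ φ * u + |φ| * |u| := by
    have := neg_abs_le (φ * u)
    rw [abs_mul] at this
    linarith
  have hB : 0 ≤ |φ| * |u| ^ q * (ρ ^ (1 - q) - |u| ^ (1 - q)) := by
    have : (0:ℝ) ≤ ρ ^ (1 - q) - |u| ^ (1 - q) := by linarith
    positivity
  refine ⟨by rw [hdecomp]; linarith, ?_, ?_⟩
  · -- forward
    intro h0
    rw [hdecomp] at h0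
    have hA0 : φ * u + |φ| * |u| = 0 := by linarith
    have hB0 : |φ| * |u| ^ q * (ρ ^ (1 - q) - |u| ^ (1 - q)) = 0 := by linarith
    rcases eq_or_ne u 0 with h | hne
    · exact Or.inl h
    · right
      have huabs : 0 < |u| := abs_pos.mpr hne
      have huq' : 0 < |u| ^ q := Real.rpow_pos_of_pos huabs q
      have hEq : |u| ^ (1 - q) = ρ ^ (1 - q) := by
        have : ρ ^ (1 - q) - |u| ^ (1 - q) = 0 := by
          rcases mul_eq_zero.mp hB0 with h | h
          · rcases mul_eq_zero.mp h with h | h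
            · exact absurd h (ne_of_gt hφpos)
            · exact absurd h (ne_of_gt huq')
          · exact h
        linarith
      have huρ : |u| = ρ := by
        by_contra hlt
        have : |u| < ρ := lt_of_le_of_ne habs hlt
        have := Real.rpow_lt_rpow (abs_nonneg u) this (by linarith : (0:ℝ) < 1 - q)
        linarith
      -- from hA0 : φ u = -|φ| |u| = -|φ| ρ < 0, so u and φ opposite signs
      have hφu : φ * u = -(|φ| * ρ) := by rw [← huρ]; linarith
      rcases lt_or_gt_of_ne hφ0 with hneg | hpos
      · -- φ < 0, sign φ = -1, claim u = ρ
        rw [Real.sign_of_neg hneg]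
        have : φ * u = φ * ρ := by
          rw [hφu, abs_of_neg hneg]; ring
        have : u = ρ := mul_left_cancel₀ hφ0 this
        rw [this]; ring
      · rw [Real.sign_of_pos hpos]
        have : φ * u = φ * (-ρ) := by
          rw [hφu, abs_of_pos hpos]; ring
        have : u = -ρ := mul_left_cancel₀ hφ0 this
        rw [this]; ring
  · -- backward
    rintro (rfl | rfl)
    · simp [Real.zero_rpow (ne_of_gt hq0)]
    · have hs : |Real.sign φ| = 1 := by
        rcases lt_or_gt_of_ne hφ0 with h | h
        · rw [Real.sign_of_neg h]; norm_num
        · rw [Real.sign_of_pos h]; norm_num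
      have habs' : |(-ρ * Real.sign φ)| = ρ := by
        rw [abs_mul, abs_neg, abs_of_pos hρ, hs, mul_one]
      have hφs : φ * Real.sign φ = |φ| := by
        rcases lt_or_gt_of_ne hφ0 with h | h
        · rw [Real.sign_of_neg h, abs_of_neg h]; ring
        · rw [Real.sign_of_pos h, abs_of_pos h]; ring
      have hρsplit : ρ = ρ ^ q * ρ ^ (1 - q) := by
        have h := Real.rpow_add' (le_of_lt hρ) (y := q) (z := 1 - q) (by norm_num)
        simpa using h
      rw [habs', ← heq]
      nlinarith [hρsplit, hφs]
end

section
/- (Theorem 4.2(i), pointwise form.) Let ū be a minimizer of G over U_∞. Then ū_i = 0 for every i ∈ I^-. -/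
/-- The pointwise Hamiltonian `G(u) = Σ φ_i u_i + γ (Σ |u_i|^p)^{q/p}`. -/
noncomputable def Gfun (m : ℕ) (p q γ : ℝ) (φ : Fin m → ℝ) (u : Fin m → ℝ) : ℝ :=
  ∑ i, φ i * u i + γ * (∑ i, |u i| ^ p) ^ (q / p)

/-- Theorem 4.2(i), pointwise form: if `ū` minimizes `G` over the box
`U_∞ = {u : |u_i| ≤ ρ_i}`, then `ū_i = 0` for every `i ∈ I^- = {i : |φ_i| ρ_i^{1-q} < γ}`. -/
theorem minimizer_zero_on_Iminus
    (m : ℕ) (hm : 1 ≤ m) (p q γ : ℝ) (hp0 : 0 < p) (hp1 : p < 1)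
    (hpq : p ≤ q) (hq1 : q ≤ 1) (hγ : 0 < γ)
    (φ ρ : Fin m → ℝ) (hρ : ∀ i, 0 < ρ i)
    (ub : Fin m → ℝ) (hub : ∀ i, |ub i| ≤ ρ i)
    (hmin : ∀ u : Fin m → ℝ, (∀ i, |u i| ≤ ρ i) → Gfun m p q γ φ ub ≤ Gfun m p q γ φ u)
    (i : Fin m) (hi : |φ i| * ρ i ^ (1 - q) < γ) :
    ub i = 0 := by
  by_contra h
  set a := |ub i| with ha_def
  have ha : 0 < a := abs_pos.mpr h
  set u : Fin m → ℝ := Function.update ub i 0 with hu_def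
  have hubox : ∀ j, |u j| ≤ ρ j := by
    intro j
    by_cases hj : j = i
    · subst hj; simp [hu_def, (hρ j).le]
    · simp [hu_def, Function.update_of_ne hj, hub j]
  have hle := hmin u hubox
  -- split the sums
  have hlin : (∑ j, φ j * u j) = ∑ j ∈ Finset.univ.erase i, φ j * ub j := by
    rw [← Finset.sum_erase (f := fun j => φ j * u j) (a := i) Finset.univ (by simp [hu_def])]
    exact Finset.sum_congr rfl fun j hj => by
      rw [hu_def, Function.update_of_ne (Finset.ne_of_mem_erase hj)]
  set S : ℝ := ∑ j ∈ Finset.univ.erase i, |ub j| ^ p with hS_def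
  have hS0 : 0 ≤ S := Finset.sum_nonneg fun j _ => Real.rpow_nonneg (abs_nonneg _) _
  have hpow : (∑ j, |u j| ^ p) = S := by
    rw [hS_def,
      ← Finset.sum_erase (f := fun j => |u j| ^ p) (a := i) Finset.univ
        (by simp [hu_def, Real.zero_rpow hp0.ne'])]
    exact Finset.sum_congr rfl fun j hj => by
      rw [hu_def, Function.update_of_ne (Finset.ne_of_mem_erase hj)]
  have hpowub : (∑ j, |ub j| ^ p) = S + a ^ p := by
    rw [hS_def, Finset.sum_erase_eq_sub (Finset.mem_univ i), ha_def]
    ring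
  have hlinub : (∑ j, φ j * ub j)
      = (∑ j ∈ Finset.univ.erase i, φ j * ub j) + φ i * ub i := by
    rw [Finset.sum_erase_eq_sub (Finset.mem_univ i)]; ring
  -- key inequality: superadditivity of x ↦ x^(q/p)
  have hr1 : 1 ≤ q / p := (one_le_div hp0).mpr hpq
  have hap0 : 0 ≤ a ^ p := Real.rpow_nonneg ha.le _
  have hsuper : S ^ (q / p) + (a ^ p) ^ (q / p) ≤ (S + a ^ p) ^ (q / p) := by
    have h := NNReal.add_rpow_le_rpow_add (Real.toNNReal S) (Real.toNNReal (a ^ p)) hr1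
    have h' := NNReal.coe_le_coe.mpr h
    rw [NNReal.coe_add, NNReal.coe_rpow, NNReal.coe_rpow, NNReal.coe_rpow, NNReal.coe_add,
      Real.coe_toNNReal _ hS0, Real.coe_toNNReal _ hap0] at h'
    exact h' 
  have haq : (a ^ p) ^ (q / p) = a ^ q := by
    rw [← Real.rpow_mul ha.le]
    congr 1
    field_simp
  have haq0 : 0 < a ^ q := Real.rpow_pos_of_pos ha _
  have hkey : |φ i| * a < γ * a ^ q := by
    have h1 : a ^ (1 - q) ≤ ρ i ^ (1 - q) :=
      Real.rpow_le_rpow (abs_nonneg _) (hub i) (by linarith)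
    have h2 : a = a ^ (1 - q) * a ^ q := by
      rw [← Real.rpow_add ha]; norm_num
    calc |φ i| * a = |φ i| * a ^ (1 - q) * a ^ q := by
          conv_lhs => rw [h2]
          ring
      _ ≤ |φ i| * ρ i ^ (1 - q) * a ^ q := by
          apply mul_le_mul_of_nonneg_right _ haq0.le
          exact mul_le_mul_of_nonneg_left h1 (abs_nonneg _)
      _ < γ * a ^ q := by exact mul_lt_mul_of_pos_right hi haq0
  have hφ : -(|φ i| * a) ≤ φ i * ub i := by
    have : |φ i * ub i| = |φ i| * a := by rw [abs_mul, ha_def]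
    nlinarith [neg_abs_le (φ i * ub i)]
  have hlt : Gfun m p q γ φ u < Gfun m p q γ φ ub := by
    unfold Gfun
    rw [hlin, hpow, hlinub, hpowub]
    nlinarith [hsuper, haq, hkey, hφ]
  linarith
end

section
/- (Theorem 4.2(iii), pointwise form.) Let ū be a minimizer of G over U_∞ and suppose I^+ ≠ ∅. Then for every i ∈ I^+ one has ū_i ∈ {0, −ρ_i·sgn(φ_i)}, and there exists at least one i ∈ I^+ with ū_i ≠ 0 (i.e., max_{i ∈ I^+} |ū_i| ≠ 0). -/
open Real Set Finset

namespace Real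

lemma mul_sign_self (x : ℝ) : x * sign x = |x| := by
  rcases lt_trichotomy x 0 with hx | rfl | hx
  · rw [sign_of_neg hx, abs_of_neg hx, mul_neg_one]
  · simp
  · rw [sign_of_pos hx, abs_of_pos hx, mul_one]

lemma mul_neg_mul_sign (x s : ℝ) : x * (-s * sign x) = -(|x| * s) := by
  rw [← mul_sign_self]; ring

lemma abs_neg_mul_sign {x s : ℝ} (hx : x ≠ 0) (hs : 0 ≤ s) : |-s * sign x| = s := by
  rcases sign_apply_eq_of_ne_zero x hx with h | h <;> simp [h, abs_of_nonneg hs]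

lemma rpow_one_sub_mul_rpow_self {x : ℝ} (hx : 0 ≤ x) (q : ℝ) : x ^ (1 - q) * x ^ q = x := by
  rw [← rpow_add' hx (by norm_num), sub_add_cancel, rpow_one]

lemma sum_rpow_le_rpow_sum {ι : Type*} (s : Finset ι) {f : ι → ℝ} (hf : ∀ i ∈ s, 0 ≤ f i)
    {r : ℝ} (hr : 1 ≤ r) : ∑ i ∈ s, f i ^ r ≤ (∑ i ∈ s, f i) ^ r := by
  classical
  induction s using Finset.induction_on with
  | empty => simp [zero_rpow (by positivity : r ≠ 0)]
  | insert j s hj ih =>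
    rw [sum_insert hj, sum_insert hj]
    have hs : ∀ i ∈ s, 0 ≤ f i := fun i hi => hf i (mem_insert_of_mem hi)
    calc f j ^ r + ∑ i ∈ s, f i ^ r ≤ f j ^ r + (∑ i ∈ s, f i) ^ r := by gcongr; exact ih hs
      _ ≤ (f j + ∑ i ∈ s, f i) ^ r :=
        add_rpow_le_rpow_add (hf j (mem_insert_self j s)) (sum_nonneg hs) hr

end Real

lemma StrictConcaveOn.const_mul {s : Set ℝ} {f : ℝ → ℝ} (hf : StrictConcaveOn ℝ s f) {c : ℝ}
    (hc : 0 < c) : StrictConcaveOn ℝ s (fun x => c * f x) := by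
  refine ⟨hf.1, fun x hx y hy hxy a b ha hb hab => ?_⟩
  have h := mul_lt_mul_of_pos_left (hf.2 hx hy hxy ha hb hab) hc
  simp only [smul_eq_mul] at h ⊢
  linarith

lemma mul_le_mul_rpow_of_mul_rpow_one_sub_le {a x ρ q γ : ℝ} (ha : 0 ≤ a) (hx : 0 ≤ x)
    (hxρ : x ≤ ρ) (hq : q ≤ 1) (h : a * ρ ^ (1 - q) ≤ γ) : a * x ≤ γ * x ^ q := by
  calc a * x = a * x ^ (1 - q) * x ^ q := by rw [mul_assoc, rpow_one_sub_mul_rpow_self hx]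
    _ ≤ a * ρ ^ (1 - q) * x ^ q := by gcongr
    _ ≤ γ * x ^ q := by gcongr

section Concavity

variable {p r A : ℝ}

lemma rpow_sub_one_mul_rpow_add_eq (hA : 0 ≤ A) {t : ℝ} (ht : 0 < t) :
    t ^ (p - 1) * (t ^ p + A) ^ (r - 1) = t ^ (p * r - 1) * (1 + A * t ^ (-p)) ^ (r - 1) := by
  have htp : 0 < t ^ p := rpow_pos_of_pos ht p
  have hsplit : t ^ p + A = t ^ p * (1 + A * t ^ (-p)) := by
    rw [rpow_neg ht.le]; field_simp
  have hexp : p * r - 1 = (p - 1) + p * (r - 1) := by ring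
  rw [hsplit, mul_rpow htp.le (by positivity), hexp, rpow_add ht, ← rpow_mul ht.le]
  ring

lemma strictAntiOn_rpow_sub_one_mul_rpow_add (hp0 : 0 < p) (hp1 : p < 1) (hr : 1 ≤ r)
    (hpr : p * r ≤ 1) (hA : 0 ≤ A) (hdeg : p * r < 1 ∨ 0 < A) :
    StrictAntiOn (fun t => t ^ (p - 1) * (t ^ p + A) ^ (r - 1)) (Ioi 0) := by
  intro x (hx : 0 < x) y (hy : 0 < y) hxy
  simp only [rpow_sub_one_mul_rpow_add_eq hA hx, rpow_sub_one_mul_rpow_add_eq hA hy]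
  have hneg : y ^ (-p) < x ^ (-p) := rpow_lt_rpow_of_neg hx hxy (by linarith)
  have hmul : A * y ^ (-p) ≤ A * x ^ (-p) := by gcongr
  have hyA : 0 < 1 + A * y ^ (-p) := by positivity
  rcases hpr.lt_or_eq with hpr' | hpr'
  · exact mul_lt_mul (rpow_lt_rpow_of_neg hx hxy (by linarith))
      (rpow_le_rpow hyA.le (by linarith) (by linarith)) (by positivity) (by positivity)
  · have hA' : 0 < A := hdeg.resolve_left hpr'.not_lt
    have hr' : 1 < r := by nlinarith
    exact mul_lt_mul' (rpow_le_rpow_of_nonpos hx hxy.le (by linarith))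
      (rpow_lt_rpow hyA.le (by nlinarith) (by linarith)) (by positivity) (by positivity)

theorem strictConcaveOn_rpow_add_rpow (hp0 : 0 < p) (hp1 : p < 1) (hr : 1 ≤ r)
    (hpr : p * r ≤ 1) (hA : 0 ≤ A) (hdeg : p * r < 1 ∨ 0 < A) :
    StrictConcaveOn ℝ (Ici 0) (fun t => (t ^ p + A) ^ r) := by
  have hderiv : ∀ t ∈ Ioi (0 : ℝ), deriv (fun t => (t ^ p + A) ^ r) t
      = p * r * (t ^ (p - 1) * (t ^ p + A) ^ (r - 1)) := by
    intro t (ht : 0 < t)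
    have hbase : t ^ p + A ≠ 0 := by positivity
    rw [(((hasDerivAt_rpow_const (Or.inl ht.ne')).add_const A).rpow_const (Or.inl hbase)).deriv]
    ring
  refine StrictAntiOn.strictConcaveOn_of_deriv (convex_Ici 0) ?_ ?_
  · exact (Continuous.rpow_const ((continuous_rpow_const hp0.le).add continuous_const)
      fun _ => Or.inr (by linarith)).continuousOn
  · rw [interior_Ici]
    intro x hx y hy hxy
    rw [hderiv x hx, hderiv y hy]
    exact mul_lt_mul_of_pos_left
      (strictAntiOn_rpow_sub_one_mul_rpow_add hp0 hp1 hr hpr hA hdeg hx hy hxy) (by positivity)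

theorem eq_right_of_isMinOn_rpow_add_rpow_sub {a γ ρ τ : ℝ} (hp0 : 0 < p) (hp1 : p < 1)
    (hr : 1 ≤ r) (hpr : p * r ≤ 1) (hA : 0 ≤ A) (hγ : 0 < γ) (ha : γ < a * ρ ^ (1 - p * r))
    (hτ : τ ∈ Ioc 0 ρ) (hmin : IsMinOn (fun s => γ * (s ^ p + A) ^ r - a * s) (Icc 0 ρ) τ) :
    τ = ρ := by
  obtain ⟨hτ0, hτρ⟩ := hτ
  by_contra hne
  have hτρ : τ < ρ := lt_of_le_of_ne hτρ hne
  by_cases hdeg : p * r < 1 ∨ 0 < A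
  · have hconc : StrictConcaveOn ℝ (Icc 0 ρ) (fun s => γ * (s ^ p + A) ^ r - a * s) :=
      (((strictConcaveOn_rpow_add_rpow hp0 hp1 hr hpr hA hdeg).const_mul hγ).subset
        Icc_subset_Ici_self (convex_Icc 0 ρ)).sub_convexOn
        ((LinearMap.mulLeft ℝ a).convexOn (convex_Icc 0 ρ))
    have hlt := hconc.lt_on_openSegment (left_mem_Icc.2 (hτ0.trans hτρ).le)
      (right_mem_Icc.2 (hτ0.trans hτρ).le) (hτ0.trans hτρ).ne
      (by rw [openSegment_eq_Ioo (hτ0.trans hτρ)]; exact ⟨hτ0, hτρ⟩)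
    rcases min_choice (γ * ((0 : ℝ) ^ p + A) ^ r - a * 0) (γ * (ρ ^ p + A) ^ r - a * ρ)
      with h | h <;> rw [h] at hlt
    · exact hlt.not_ge (hmin (left_mem_Icc.2 (hτ0.trans hτρ).le))
    · exact hlt.not_ge (hmin (right_mem_Icc.2 (hτ0.trans hτρ).le))
  · rw [not_or, not_lt, not_lt] at hdeg
    have hpr1 : p * r = 1 := le_antisymm hpr hdeg.1
    have hA0 : A = 0 := le_antisymm hdeg.2 hA
    have hlin : ∀ s : ℝ, 0 ≤ s → (s ^ p + A) ^ r = s := fun s hs => by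
      rw [hA0, add_zero, ← rpow_mul hs, hpr1, rpow_one]
    have hρτ : γ * (τ ^ p + A) ^ r - a * τ ≤ γ * (ρ ^ p + A) ^ r - a * ρ :=
      hmin (right_mem_Icc.2 (hτ0.trans hτρ).le)
    rw [hlin τ hτ0.le, hlin ρ (hτ0.trans hτρ).le] at hρτ
    rw [hpr1, sub_self, rpow_zero, mul_one] at ha
    nlinarith

end Concavity

section Gfun

variable {m : ℕ} {p q γ : ℝ} {φ ρ u : Fin m → ℝ}

lemma Gfun_update (u : Fin m → ℝ) (i : Fin m) (t : ℝ) :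
    Gfun m p q γ φ (Function.update u i t)
      = φ i * t + γ * (|t| ^ p + ∑ k ∈ univ.erase i, |u k| ^ p) ^ (q / p)
        + ∑ k ∈ univ.erase i, φ k * u k := by
  have hrest : ∀ g : ℝ → ℝ → ℝ, ∑ k ∈ univ.erase i, g (φ k) (Function.update u i t k)
      = ∑ k ∈ univ.erase i, g (φ k) (u k) :=
    fun g => sum_congr rfl fun k hk => by rw [Function.update_of_ne (ne_of_mem_erase hk)]
  unfold Gfun
  rw [← add_sum_erase _ _ (mem_univ i), ← add_sum_erase _ _ (mem_univ i),
    hrest fun c v => c * v, hrest fun _ v => |v| ^ p, Function.update_self]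
  ring

lemma Gfun_le_update_of_isMin (hub : ∀ i, |u i| ≤ ρ i)
    (hmin : ∀ v : Fin m → ℝ, (∀ i, |v i| ≤ ρ i) → Gfun m p q γ φ u ≤ Gfun m p q γ φ v)
    (i : Fin m) {t : ℝ} (ht : |t| ≤ ρ i) :
    φ i * u i + γ * (|u i| ^ p + ∑ k ∈ univ.erase i, |u k| ^ p) ^ (q / p)
      ≤ φ i * t + γ * (|t| ^ p + ∑ k ∈ univ.erase i, |u k| ^ p) ^ (q / p) := by
  have h := hmin (Function.update u i t)
    ((Function.forall_update_iff u fun k v => |v| ≤ ρ k).2 ⟨ht, fun k _ => hub k⟩)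
  have hu := Gfun_update (p := p) (q := q) (γ := γ) (φ := φ) u i (u i)
  rw [Function.update_eq_self] at hu
  rw [hu, Gfun_update] at h
  linarith

lemma sum_mul_add_mul_abs_rpow_le_Gfun (hp0 : 0 < p) (hpq : p ≤ q) (hγ : 0 ≤ γ)
    (u : Fin m → ℝ) : ∑ i, (φ i * u i + γ * |u i| ^ q) ≤ Gfun m p q γ φ u := by
  have hpow : ∀ i, |u i| ^ q = (|u i| ^ p) ^ (q / p) := fun i => by
    rw [← rpow_mul (abs_nonneg _), mul_div_cancel₀ _ hp0.ne']
  rw [sum_add_distrib, ← mul_sum]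
  unfold Gfun
  simp only [hpow]
  gcongr
  exact sum_rpow_le_rpow_sum _ (fun i _ => by positivity) ((one_le_div hp0).2 hpq)

lemma Gfun_single (hp0 : 0 < p) (j : Fin m) (t : ℝ) :
    Gfun m p q γ φ (Pi.single j t) = φ j * t + γ * |t| ^ q := by
  unfold Gfun
  rw [Fintype.sum_eq_single j fun k hk => by simp [hk],
    Fintype.sum_eq_single j fun k hk => by simp [hk, zero_rpow hp0.ne'],
    Pi.single_eq_same, ← rpow_mul (abs_nonneg _), mul_div_cancel₀ _ hp0.ne']

variable (hp0 : 0 < p) (hpq : p ≤ q) (hq1 : q ≤ 1) (hγ : 0 < γ) (hub : ∀ i, |u i| ≤ ρ i)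
  (hmin : ∀ v : Fin m → ℝ, (∀ i, |v i| ≤ ρ i) → Gfun m p q γ φ u ≤ Gfun m p q γ φ v)
include hp0 hpq hq1 hγ hub hmin

theorem eq_zero_or_eq_neg_mul_sign_of_isMin (hp1 : p < 1) {i : Fin m}
    (hi : γ < |φ i| * ρ i ^ (1 - q)) : u i = 0 ∨ u i = -ρ i * sign (φ i) := by
  by_cases h0 : u i = 0
  · exact Or.inl h0
  right
  have hφ : φ i ≠ 0 := by rintro h; rw [h, abs_zero, zero_mul] at hi; linarith
  have hpr : p * (q / p) = q := mul_div_cancel₀ _ hp0.ne'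
  have hle := fun t (ht : |t| ≤ ρ i) => Gfun_le_update_of_isMin hub hmin i ht
  have hsign : φ i * u i = -(|φ i| * |u i|) := by
    have h := hle (-u i) (by rw [abs_neg]; exact hub i)
    rw [abs_neg] at h
    rw [← abs_mul, abs_of_nonpos (by linarith), neg_neg]
  have hτ : |u i| = ρ i := by
    refine eq_right_of_isMinOn_rpow_add_rpow_sub (A := ∑ k ∈ univ.erase i, |u k| ^ p) hp0 hp1
      ((one_le_div hp0).2 hpq) (by rwa [hpr]) (sum_nonneg fun k _ => by positivity) hγ
      (by rwa [hpr]) ⟨abs_pos.2 h0, hub i⟩ (isMinOn_iff.2 fun s hs => ?_)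
    have h := hle (-s * sign (φ i)) (by rw [abs_neg_mul_sign hφ hs.1]; exact hs.2)
    rw [mul_neg_mul_sign, abs_neg_mul_sign hφ hs.1, hsign] at h
    linarith
  apply mul_left_cancel₀ hφ
  rw [hsign, hτ, mul_neg_mul_sign]

theorem exists_ne_zero_of_isMin (hρ : ∀ i, 0 < ρ i)
    (hj : ∃ j, γ < |φ j| * ρ j ^ (1 - q)) : ∃ i, γ < |φ i| * ρ i ^ (1 - q) ∧ u i ≠ 0 := by
  by_contra hcon
  simp only [not_exists, not_and, not_not] at hcon
  obtain ⟨j, hj⟩ := hj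
  have hφj : φ j ≠ 0 := by rintro h; rw [h, abs_zero, zero_mul] at hj; linarith
  set e : Fin m → ℝ := Pi.single j (-ρ j * sign (φ j))
  have he : ∀ k, |e k| ≤ ρ k := by
    intro k
    rcases eq_or_ne k j with rfl | hk
    · simp only [e, Pi.single_eq_same, abs_neg_mul_sign hφj (hρ k).le, le_refl]
    · simp [e, hk, (hρ k).le]
  have hGe : Gfun m p q γ φ e < 0 := by
    have h := mul_lt_mul_of_pos_right hj (rpow_pos_of_pos (hρ j) q)
    rw [mul_assoc, rpow_one_sub_mul_rpow_self (hρ j).le] at h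
    rw [Gfun_single hp0, mul_neg_mul_sign, abs_neg_mul_sign hφj (hρ j).le]
    linarith
  have hGu : 0 ≤ Gfun m p q γ φ u := by
    refine (sum_nonneg fun i _ => ?_).trans (sum_mul_add_mul_abs_rpow_le_Gfun hp0 hpq hγ.le u)
    by_cases hi : γ < |φ i| * ρ i ^ (1 - q)
    · simp [hcon i hi, zero_rpow (hp0.trans_le hpq).ne']
    · have h := mul_le_mul_rpow_of_mul_rpow_one_sub_le (abs_nonneg (φ i)) (abs_nonneg (u i))
        (hub i) hq1 (not_lt.1 hi)
      have habs := neg_abs_le (φ i * u i)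
      rw [abs_mul] at habs
      linarith
  linarith [hmin e he]

end Gfun

theorem minimizer_bang_off_bang_on_Iplus_general
    (m : ℕ) (p q γ : ℝ) (hp0 : 0 < p) (hp1 : p < 1)
    (hpq : p ≤ q) (hq1 : q ≤ 1) (hγ : 0 < γ)
    (φ ρ : Fin m → ℝ) (hρ : ∀ i, 0 < ρ i)
    (ub : Fin m → ℝ) (hub : ∀ i, |ub i| ≤ ρ i)
    (hmin : ∀ u : Fin m → ℝ, (∀ i, |u i| ≤ ρ i) → Gfun m p q γ φ ub ≤ Gfun m p q γ φ u)
    (hIplus : ∃ j, γ < |φ j| * ρ j ^ (1 - q)) :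
    (∀ i, γ < |φ i| * ρ i ^ (1 - q) →
      ub i = 0 ∨ ub i = -ρ i * Real.sign (φ i)) ∧
    (∃ i, γ < |φ i| * ρ i ^ (1 - q) ∧ ub i ≠ 0) :=
  ⟨fun _ hi => eq_zero_or_eq_neg_mul_sign_of_isMin hp0 hpq hq1 hγ hub hmin hp1 hi,
    exists_ne_zero_of_isMin hp0 hpq hq1 hγ hub hmin hρ hIplus⟩

/-- Theorem 4.2(iii), pointwise form: if `ū` minimizes `G` over the box
`U_∞` and `I^+ ≠ ∅`, then every `i ∈ I^+` satisfies `ū_i ∈ {0, -ρ_i sgn(φ_i)}`, and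
at least one coordinate indexed by `I^+` is nonzero. -/
theorem minimizer_bang_off_bang_on_Iplus
    (m : ℕ) (hm : 1 ≤ m) (p q γ : ℝ) (hp0 : 0 < p) (hp1 : p < 1)
    (hpq : p ≤ q) (hq1 : q ≤ 1) (hγ : 0 < γ)
    (φ ρ : Fin m → ℝ) (hρ : ∀ i, 0 < ρ i)
    (ub : Fin m → ℝ) (hub : ∀ i, |ub i| ≤ ρ i)
    (hmin : ∀ u : Fin m → ℝ, (∀ i, |u i| ≤ ρ i) → Gfun m p q γ φ ub ≤ Gfun m p q γ φ u)
    (hIplus : ∃ j, γ < |φ j| * ρ j ^ (1 - q)) :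
    (∀ i, γ < |φ i| * ρ i ^ (1 - q) →
      ub i = 0 ∨ ub i = -ρ i * Real.sign (φ i)) ∧
    (∃ i, γ < |φ i| * ρ i ^ (1 - q) ∧ ub i ≠ 0) :=
  minimizer_bang_off_bang_on_Iplus_general m p q γ hp0 hp1 hpq hq1 hγ φ ρ hρ ub hub hmin hIplus
end

section
/- (Theorem 4.3, pointwise form, active case.) Fix an integer m ≥ 1, reals p, q with 0 < p < 1 and p ≤ q ≤ 1, γ > 0 and ρ > 0. Let φ ∈ ℝ^m, define G(u) = Σ_{i=1}^m φ_i u_i + γ (Σ_{i=1}^m |u_i|^p)^{q/p}, let U_2 = {u ∈ ℝ^m : Σ_{i=1}^m u_i^2 ≤ ρ^2}, and let I^+ = {i : |φ_i|·ρ^{1−q} > γ}. If I^+ ≠ ∅, then every minimizer ū of G over U_2 satisfies Σ_{i=1}^m ū_i^2 = ρ^2, i.e., the constraint is active. -/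
/-- Theorem 4.3, pointwise form, active case: if
`I^+ = {i : |φ_i| ρ^{1-q} > γ}` is nonempty, then every minimizer of `G` over the
Euclidean ball `U_2 = {u : Σ u_i² ≤ ρ²}` lies on the sphere `Σ u_i² = ρ²`. -/
theorem euclidean_constraint_active
    (m : ℕ) (hm : 1 ≤ m) (p q γ ρ : ℝ) (hp0 : 0 < p) (hp1 : p < 1)
    (hpq : p ≤ q) (hq1 : q ≤ 1) (hγ : 0 < γ) (hρ : 0 < ρ)
    (φ : Fin m → ℝ) (hIplus : ∃ i, γ < |φ i| * ρ ^ (1 - q))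
    (ub : Fin m → ℝ) (hub : ∑ i, ub i ^ 2 ≤ ρ ^ 2)
    (hmin : ∀ u : Fin m → ℝ, (∑ i, u i ^ 2 ≤ ρ ^ 2) →
      Gfun m p q γ φ ub ≤ Gfun m p q γ φ u) :
    ∑ i, ub i ^ 2 = ρ ^ 2 := by
  obtain ⟨i, hi⟩ := hIplus
  have hq0 : 0 < q := hp0.trans_le hpq
  have hφi : φ i ≠ 0 := by
    intro h
    rw [h, abs_zero, zero_mul] at hi
    exact absurd hi (not_lt.2 hγ.le)
  have hφipos : 0 < |φ i| := abs_pos.2 hφi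
  -- test point u0 on the sphere in direction -sign(φ i) e_i
  set c : ℝ := -(φ i / |φ i|) * ρ with hc
  set u0 : Fin m → ℝ := fun j => if j = i then c else 0 with hu0
  have habsc : |c| = ρ := by
    rw [hc, abs_mul, abs_neg, abs_div, abs_abs, div_self hφipos.ne',
      abs_of_pos hρ, one_mul]
  have hsum : ∀ f : ℝ → ℝ, f 0 = 0 → ∑ j, f (u0 j) = f c := by
    intro f hf
    rw [Finset.sum_eq_single i]
    · simp [hu0]
    · intro j _ hj; simp [hu0, hj, hf]
    · intro h; exact absurd (Finset.mem_univ i) h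
  have hu0ball : ∑ j, u0 j ^ 2 = ρ ^ 2 := by
    have := hsum (fun x => x ^ 2) (by norm_num)
    rw [this, ← habsc, sq_abs]
  have hGu0 : Gfun m p q γ φ u0 = -(|φ i| * ρ) + γ * ρ ^ q := by
    have h1 : ∑ j, φ j * u0 j = -(|φ i| * ρ) := by
      rw [Finset.sum_eq_single i]
      · rw [hu0]; simp only [if_pos rfl]
        rw [hc]
        have habs2 : φ i * φ i = |φ i| * |φ i| := (abs_mul_abs_self _).symm
        calc φ i * (-(φ i / |φ i|) * ρ)
            = -((φ i * φ i) / |φ i|) * ρ := by ring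
          _ = -((|φ i| * |φ i|) / |φ i|) * ρ := by rw [habs2]
          _ = -(|φ i| * ρ) := by
              rw [mul_div_assoc, div_self hφipos.ne', mul_one, neg_mul]
      · intro j _ hj; simp [hu0, hj]
      · intro h; exact absurd (Finset.mem_univ i) h
    have h2 : ∑ j, |u0 j| ^ p = ρ ^ p := by
      have := hsum (fun x => |x| ^ p) (by simp [Real.zero_rpow hp0.ne'])
      rw [this, habsc]
    rw [Gfun, h1, h2, ← Real.rpow_mul hρ.le,
      show p * (q / p) = q from by field_simp]
  have hGu0neg : Gfun m p q γ φ u0 < 0 := by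
    rw [hGu0]
    have : γ * ρ ^ q < (|φ i| * ρ ^ (1 - q)) * ρ ^ q :=
      mul_lt_mul_of_pos_right hi (Real.rpow_pos_of_pos hρ q)
    have h2 : (|φ i| * ρ ^ (1 - q)) * ρ ^ q = |φ i| * ρ := by
      rw [mul_assoc, ← Real.rpow_add hρ]
      norm_num
    linarith [h2 ▸ this]
  have hGub : Gfun m p q γ φ ub < 0 := lt_of_le_of_lt (hmin u0 hu0ball.le) hGu0neg
  -- now suppose the constraint is inactive
  by_contra hne
  have hs : ∑ j, ub j ^ 2 < ρ ^ 2 := lt_of_le_of_ne hub hne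
  set s : ℝ := ∑ j, ub j ^ 2 with hsdef
  have hs0 : 0 ≤ s := Finset.sum_nonneg fun j _ => sq_nonneg _
  have hspos : 0 < s := by
    rcases hs0.lt_or_eq with h | h
    · exact h
    · exfalso
      have hzero : ∀ j, ub j = 0 := by
        intro j
        have := (Finset.sum_eq_zero_iff_of_nonneg
          (fun j _ => sq_nonneg (ub j))).1 h.symm j (Finset.mem_univ j)
        exact pow_eq_zero_iff (n := 2) (by norm_num) |>.1 this
      have : Gfun m p q γ φ ub = 0 := by
        simp [Gfun, hzero, Real.zero_rpow hp0.ne',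
          Real.zero_rpow (div_pos hq0 hp0).ne']
      linarith
  set t : ℝ := ρ / Real.sqrt s with ht
  have hst : Real.sqrt s < ρ := by
    have := Real.sqrt_lt_sqrt hs0 hs
    rwa [Real.sqrt_sq hρ.le] at this
  have hsqrtpos : 0 < Real.sqrt s := Real.sqrt_pos.2 hspos
  have ht1 : 1 < t := (one_lt_div hsqrtpos).2 hst
  have ht0 : 0 < t := lt_trans one_pos ht1
  -- the scaled point t • ub
  have hball : ∑ j, (t * ub j) ^ 2 = ρ ^ 2 := by
    have : ∑ j, (t * ub j) ^ 2 = t ^ 2 * s := by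
      rw [hsdef, Finset.mul_sum]; congr 1; ext j; ring
    rw [this, ht, div_pow, Real.sq_sqrt hs0, div_mul_cancel₀ _ hspos.ne']
  set A : ℝ := ∑ j, φ j * ub j with hA
  set B : ℝ := γ * (∑ j, |ub j| ^ p) ^ (q / p) with hB
  have hBnn : 0 ≤ B :=
    mul_nonneg hγ.le (Real.rpow_nonneg
      (Finset.sum_nonneg fun j _ => Real.rpow_nonneg (abs_nonneg _) p) _)
  have hGscale : Gfun m p q γ φ (fun j => t * ub j) = t * A + t ^ q * B := by
    rw [Gfun]
    have h1 : ∑ j, φ j * (t * ub j) = t * A := by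
      rw [hA, Finset.mul_sum]; congr 1; ext j; ring
    have h2 : ∑ j, |t * ub j| ^ p = t ^ p * ∑ j, |ub j| ^ p := by
      rw [Finset.mul_sum]; congr 1; ext j
      rw [abs_mul, abs_of_pos ht0, Real.mul_rpow ht0.le (abs_nonneg _)]
    rw [h1, h2, Real.mul_rpow (Real.rpow_nonneg ht0.le p)
      (Finset.sum_nonneg fun j _ => Real.rpow_nonneg (abs_nonneg _) p),
      ← Real.rpow_mul ht0.le, show p * (q / p) = q from by field_simp, hB]
    ring
  have htq : t ^ q ≤ t := by
    nth_rewrite 2 [← Real.rpow_one t]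
    exact Real.rpow_le_rpow_of_exponent_le ht1.le hq1
  have hAB : Gfun m p q γ φ ub = A + B := rfl
  have hcontra : Gfun m p q γ φ (fun j => t * ub j) < Gfun m p q γ φ ub := by
    rw [hGscale, hAB]
    have h1 : t ^ q * B ≤ t * B := mul_le_mul_of_nonneg_right htq hBnn
    have h2 : t * (A + B) < A + B := by
      have := hGub
      rw [hAB] at this
      nlinarith
    linarith
  exact absurd (hmin _ hball.le) (not_le.2 hcontra)
end

section
/- Let A be a real d×d matrix, B a real d×m matrix, λ > 0, y_d ∈ ℝ^d, 0 ≤ a < b and ω ∈ ℝ^m. Let g : [0, ∞) → ℝ^d be continuous. Suppose φ : [0, ∞) → ℝ^d is differentiable with −φ'(t) = Aᵀφ(t) + e^{−λt}(g(t) − y_d) for all t > 0, and δ : [0, ∞) → ℝ^d is continuous, δ(0) = 0, and δ is differentiable with δ'(t) = Aδ(t) + Bω for t ∈ (a, b) and δ'(t) = Aδ(t) for t ∉ [a, b]. Assume that t ↦ e^{−λt}⟨g(t) − y_d, δ(t)⟩ is integrable on (0, ∞), that t ↦ ⟨φ(t), Bω⟩ is integrable on (a, b), and that ⟨φ(t),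 δ(t)⟩ → 0 as t → ∞. Then ∫₀^∞ e^{−λt}⟨g(t) − y_d, δ(t)⟩ dt = ∫_a^b ⟨φ(t), Bω⟩ dt. -/
/-!
Put `h t = ⟨φ t, δ t⟩`. Off `{a, b}` the `A`-terms of the two equations cancel in `h'`, leaving
`h' = 1_{(a,b)} ⟨φ, Bω⟩ - e^{-λt} ⟨g - y_d, δ⟩`, and `h 0 = 0`, `h → 0` at infinity, so the
fundamental theorem of calculus on `(0, ∞)` gives the identity. The only delicate point is
continuity of `h` at `0`, where `φ` is not assumed continuous: `φ` solves an affine ODE with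
forcing bounded on `(0, 1]`, so Grönwall's inequality, run backwards from `1`, bounds it there,
while `δ t → δ 0 = 0`.
-/

/-- The Euclidean inner product on `ℝ^d` (as `Fin d → ℝ`). -/
def eInner {d : ℕ} (x y : Fin d → ℝ) : ℝ := ∑ i, x i * y i

open MeasureTheory Set Filter Topology Real Matrix

section RealVariable

variable {E : Type*} [NormedAddCommGroup E] [NormedSpace ℝ E]

/-- Grönwall's inequality run backwards from `b`. -/
theorem exists_norm_le_of_norm_deriv_le_Ioc {f f' : ℝ → E} {a b K M : ℝ}
    (hf : ∀ t ∈ Ioc a b, HasDerivAt f (f' t) t)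
    (bound : ∀ t ∈ Ioc a b, ‖f' t‖ ≤ K * ‖f t‖ + M) :
    ∃ C, ∀ t ∈ Ioc a b, ‖f t‖ ≤ C := by
  have hgb : Continuous (gronwallBound ‖f b‖ K M) :=
    continuous_iff_continuousAt.2 fun x => (hasDerivAt_gronwallBound _ _ _ x).continuousAt
  obtain ⟨C, hC⟩ :=
    isCompact_Icc.exists_bound_of_continuousOn (hgb.continuousOn (s := Icc 0 (b - a)))
  refine ⟨C, fun t ht => ?_⟩
  have hmem : ∀ s ∈ Icc 0 (b - t), b - s ∈ Ioc a b := fun s hs =>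
    ⟨by linarith [hs.2, ht.1], by linarith [hs.1]⟩
  have hrev := norm_le_gronwallBound_of_norm_deriv_right_le (f := fun s => f (b - s))
    (f' := fun s => -f' (b - s)) (δ := ‖f b‖) (K := K) (ε := M) (a := 0) (b := b - t)
    (fun s hs => (hf _ (hmem s hs)).continuousAt.comp_continuousWithinAt (by fun_prop))
    (fun s hs => ((hf _ (hmem s (Ico_subset_Icc_self hs))).comp_const_sub b s).hasDerivWithinAt)
    (by simp) (fun s hs => by simpa using bound _ (hmem s (Ico_subset_Icc_self hs)))
    (b - t) ⟨by linarith [ht.2], le_rfl⟩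
  simp only [sub_sub_cancel, sub_zero] at hrev
  exact hrev.trans ((Real.le_norm_self _).trans (hC _ ⟨by linarith [ht.2], by linarith [ht.1]⟩))

theorem exists_norm_le_of_hasDerivAt_affine_Ioc {x u : ℝ → E} {a b : ℝ} (L : E →L[ℝ] E)
    (hx : ∀ t ∈ Ioc a b, HasDerivAt x (L (x t) + u t) t) (hu : ContinuousOn u (Icc a b)) :
    ∃ C, ∀ t ∈ Ioc a b, ‖x t‖ ≤ C := by
  obtain ⟨M, hM⟩ := isCompact_Icc.exists_bound_of_continuousOn hu
  exact exists_norm_le_of_norm_deriv_le_Ioc hx fun t ht =>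
    (norm_add_le _ _).trans (add_le_add (L.le_opNorm _) (hM t (Ioc_subset_Icc_self ht)))

theorem integral_Ioi_of_hasDerivAt_off_countable_of_tendsto [CompleteSpace E]
    {f f' : ℝ → E} {a : ℝ} {m : E} {s : Set ℝ} (hs : s.Countable)
    (hcont : ContinuousOn f (Ici a))
    (hderiv : ∀ x ∈ Ioi a \ s, HasDerivAt f (f' x) x) (hint : IntegrableOn f' (Ioi a))
    (hlim : Tendsto f atTop (𝓝 m)) :
    ∫ x in Ioi a, f' x = m - f a := by
  refine tendsto_nhds_unique (intervalIntegral_tendsto_integral_Ioi a hint tendsto_id) ?_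
  refine (hlim.sub_const (f a)).congr' ?_
  filter_upwards [eventually_ge_atTop a] with b hb
  refine (integral_eq_of_hasDerivAt_off_countable_of_le f f' hb hs
    (hcont.mono Icc_subset_Ici_self) (fun x hx => hderiv x ⟨hx.1.1, hx.2⟩) ?_).symm
  exact (intervalIntegrable_iff_integrableOn_Ioc_of_le hb).2 (hint.mono_set Ioc_subset_Ioi_self)

end RealVariable

theorem eInner_eq_dotProduct {d : ℕ} (x y : Fin d → ℝ) : eInner x y = x ⬝ᵥ y := rfl

theorem HasDerivAt.eInner {d : ℕ} {f g : ℝ → Fin d → ℝ} {f' g' : Fin d → ℝ} {t : ℝ}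
    (hf : HasDerivAt f f' t) (hg : HasDerivAt g g' t) :
    HasDerivAt (fun s => _root_.eInner (f s) (g s))
      (_root_.eInner f' (g t) + _root_.eInner (f t) g') t := by
  simpa [_root_.eInner, Finset.sum_add_distrib] using
    HasDerivAt.fun_sum fun i _ => (hasDerivAt_pi.1 hf i).mul (hasDerivAt_pi.1 hg i)

theorem ContinuousWithinAt.eInner {d : ℕ} {f g : ℝ → Fin d → ℝ} {s : Set ℝ} {t : ℝ}
    (hf : ContinuousWithinAt f s t) (hg : ContinuousWithinAt g s t) :
    ContinuousWithinAt (fun s => _root_.eInner (f s) (g s)) s t :=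
  ((continuous_fst.dotProduct continuous_snd).continuousAt).comp_continuousWithinAt (hf.prodMk hg)

theorem tendsto_eInner_zero_of_isBoundedUnder {α : Type*} {d : ℕ} {l : Filter α}
    {x y : α → Fin d → ℝ} (hx : IsBoundedUnder (· ≤ ·) l fun s => ‖x s‖)
    (hy : Tendsto y l (𝓝 0)) :
    Tendsto (fun s => eInner (x s) (y s)) l (𝓝 0) := by
  simpa [eInner] using tendsto_finsetSum Finset.univ fun i _ =>
    isBoundedUnder_le_mul_tendsto_zero
      (hx.mono_le (Eventually.of_forall fun s => norm_le_pi_norm (x s) i))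
      ((continuous_apply i).tendsto' 0 0 rfl |>.comp hy)

/-- The `A`-terms cancel because `⟨Aᵀφ, δ⟩ = ⟨φ, Aδ⟩`. -/
theorem hasDerivAt_eInner_adjoint {d : ℕ} {A : Matrix (Fin d) (Fin d) ℝ}
    {φ δ : ℝ → Fin d → ℝ} {f u : Fin d → ℝ} {t : ℝ}
    (hφ : HasDerivAt φ (-(Aᵀ *ᵥ φ t) - f) t) (hδ : HasDerivAt δ (A *ᵥ δ t + u) t) :
    HasDerivAt (fun s => eInner (φ s) (δ s)) (eInner (φ t) u - eInner f (δ t)) t := by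
  convert hφ.eInner hδ using 1
  simp only [eInner_eq_dotProduct, sub_dotProduct, neg_dotProduct, dotProduct_add,
    Matrix.mulVec_transpose, Matrix.dotProduct_mulVec]
  ring

theorem adjoint_identity_general
    (d m : ℕ) (A : Matrix (Fin d) (Fin d) ℝ) (B : Matrix (Fin d) (Fin m) ℝ)
    (lam : ℝ) (yd : Fin d → ℝ)
    (a b : ℝ) (ha : 0 ≤ a) (hab : a < b) (ω : Fin m → ℝ)
    (g φ δ : ℝ → Fin d → ℝ)
    (hg : ContinuousOn g (Set.Ici 0))
    (hφ : ∀ t > (0 : ℝ), HasDerivAt φ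
      (-(A.transpose.mulVec (φ t)) - Real.exp (-lam * t) • (g t - yd)) t)
    (hδc : ContinuousOn δ (Set.Ici 0)) (hδ0 : δ 0 = 0)
    (hδ1 : ∀ t ∈ Set.Ioo a b, HasDerivAt δ (A.mulVec (δ t) + B.mulVec ω) t)
    (hδ2 : ∀ t > (0 : ℝ), t ∉ Set.Icc a b → HasDerivAt δ (A.mulVec (δ t)) t)
    (hint1 : MeasureTheory.IntegrableOn
      (fun t => Real.exp (-lam * t) * eInner (g t - yd) (δ t)) (Set.Ioi 0))
    (hint2 : MeasureTheory.IntegrableOn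
      (fun t => eInner (φ t) (B.mulVec ω)) (Set.Ioo a b))
    (hlim : Filter.Tendsto (fun t => eInner (φ t) (δ t)) Filter.atTop (nhds 0)) :
    ∫ t in Set.Ioi (0 : ℝ), Real.exp (-lam * t) * eInner (g t - yd) (δ t)
      = ∫ t in a..b, eInner (φ t) (B.mulVec ω) := by
  set F := fun t => exp (-lam * t) * eInner (g t - yd) (δ t)
  set G := fun t => eInner (φ t) (B *ᵥ ω)
  have hφδ0 : eInner (φ 0) (δ 0) = 0 := by simp [eInner, hδ0]
  obtain ⟨C, hC⟩ : ∃ C, ∀ t ∈ Ioc 0 1, ‖φ t‖ ≤ C :=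
    exists_norm_le_of_hasDerivAt_affine_Ioc (-(mulVecLin Aᵀ).toContinuousLinearMap)
      (u := fun t => -(exp (-lam * t) • (g t - yd)))
      (fun t ht => (hφ t ht.1).congr_deriv (sub_eq_add_neg _ _))
      (by have := hg.mono (Icc_subset_Ici_self : Icc (0 : ℝ) 1 ⊆ _); fun_prop)
  have hcont : ContinuousOn (fun t => eInner (φ t) (δ t)) (Ici 0) := by
    intro t ht
    rcases (mem_Ici.1 ht).eq_or_lt with rfl | ht
    · rw [← continuousWithinAt_Ioi_iff_Ici, ContinuousWithinAt, hφδ0]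
      refine tendsto_eInner_zero_of_isBoundedUnder
        (isBoundedUnder_of_eventually_le (a := C) ?_) ?_
      · filter_upwards [Ioc_mem_nhdsGT zero_lt_one] with t ht using hC t ht
      · exact hδ0 ▸ (hδc 0 self_mem_Ici).mono Ioi_subset_Ici_self
    · exact (hφ t ht).continuousAt.continuousWithinAt.eInner (hδc t ht.le)
  have hderiv : ∀ t ∈ Ioi 0 \ {a, b},
      HasDerivAt (fun t => eInner (φ t) (δ t)) ((Ioo a b).indicator G t - F t) t := by
    rintro t ⟨ht, htab⟩
    by_cases hI : t ∈ Ioo a b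
    · simpa [hI, F, G, eInner_eq_dotProduct] using
        hasDerivAt_eInner_adjoint (hφ t ht) (hδ1 t hI)
    · have hIcc : t ∉ Icc a b := by
        rw [← Icc_sdiff_both, Set.mem_sdiff, not_and_not_right] at hI
        exact mt hI htab
      simpa [hI, F, eInner_eq_dotProduct] using
        hasDerivAt_eInner_adjoint (hφ t ht) ((hδ2 t ht hIcc).congr_deriv (add_zero _).symm)
  have hGint : IntegrableOn ((Ioo a b).indicator G) (Ioi 0) :=
    (hint2.integrable_indicator measurableSet_Ioo).integrableOn
  have hFTC := integral_Ioi_of_hasDerivAt_off_countable_of_tendsto (by simp) hcont hderiv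
    (hGint.sub hint1) hlim
  rw [integral_sub hGint hint1, setIntegral_indicator measurableSet_Ioo,
    inter_eq_right.2 (Ioo_subset_Ioi_self.trans (Ioi_subset_Ioi ha)), hφδ0, sub_zero] at hFTC
  rw [intervalIntegral.integral_of_le hab.le, integral_Ioc_eq_integral_Ioo]
  linarith

/-- equation (EqBomega) in the proof of Proposition 5.1: the adjoint
identity `∫₀^∞ e^{-λt} ⟨g(t) - y_d, δ(t)⟩ dt = ∫_a^b ⟨φ(t), Bω⟩ dt`. -/
theorem adjoint_identity
    (d m : ℕ) (A : Matrix (Fin d) (Fin d) ℝ) (B : Matrix (Fin d) (Fin m) ℝ)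
    (lam : ℝ) (hlam : 0 < lam) (yd : Fin d → ℝ)
    (a b : ℝ) (ha : 0 ≤ a) (hab : a < b) (ω : Fin m → ℝ)
    (g φ δ : ℝ → Fin d → ℝ)
    (hg : ContinuousOn g (Set.Ici 0))
    (hφ : ∀ t > (0 : ℝ), HasDerivAt φ
      (-(A.transpose.mulVec (φ t)) - Real.exp (-lam * t) • (g t - yd)) t)
    (hδc : ContinuousOn δ (Set.Ici 0)) (hδ0 : δ 0 = 0)
    (hδ1 : ∀ t ∈ Set.Ioo a b, HasDerivAt δ (A.mulVec (δ t) + B.mulVec ω) t)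
    (hδ2 : ∀ t > (0 : ℝ), t ∉ Set.Icc a b → HasDerivAt δ (A.mulVec (δ t)) t)
    (hint1 : MeasureTheory.IntegrableOn
      (fun t => Real.exp (-lam * t) * eInner (g t - yd) (δ t)) (Set.Ioi 0))
    (hint2 : MeasureTheory.IntegrableOn
      (fun t => eInner (φ t) (B.mulVec ω)) (Set.Ioo a b))
    (hlim : Filter.Tendsto (fun t => eInner (φ t) (δ t)) Filter.atTop (nhds 0)) :
    ∫ t in Set.Ioi (0 : ℝ), Real.exp (-lam * t) * eInner (g t - yd) (δ t)
      = ∫ t in a..b, eInner (φ t) (B.mulVec ω) :=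
  adjoint_identity_general d m A B lam yd a b ha hab ω g φ δ hg hφ hδc hδ0 hδ1 hδ2 hint1 hint2 hlim
end

section
/- (Theorem 3.2, existence for the time-discretized problem.) Let 0 < p < 1, p ≤ q ≤ 1, λ > 0, γ > 0, y_d ∈ ℝ^d, x ∈ ℝ^d. Let U ⊂ ℝ^m be compact and convex, and let f_0, f_1, …, f_m : ℝ^d → ℝ^d be Lipschitz continuous with a common constant L. Fix a temporal grid 0 = t_0 < t_1 < ⋯ with t_k → ∞, set I_k = [t_k, t_{k+1}) and b_k = (e^{−λt_k} − e^{−λt_{k+1}})/λ. For a piecewise constant control u with constant value u_k = (u_{1,k}, …, u_{m,k}) ∈ U on each I_k, let y_u : [0, ∞) → ℝ^d denote the unique solution of ẏ(t) = f_0(y(t)) + Σ_{i=1}^m f_i(y(t)) u_i(t), y(0) = x, and define the cost (with values in [0, ∞]) J^Δ(x, u) = ∫₀^∞ e^{−λt} (1/2)‖y_u(t) − y_d‖²₂ dt + γ Σ_{k=0}^∞ b_k (Σ_{i=1}^m |u_{i,k}|^p)^{q/p}. Then there exists a piecewise constant control ū with values in U such that J^Δ(x, ū) ≤ J^Δ(x,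 u) for every piecewise constant control u with values in U. -/
/-!
Direct method. Admissible controls form the product `U^ℕ`, which is compact and metrizable, so a
minimizing sequence has a subsequence converging on every grid interval. The trajectories then
converge pointwise: on `[0, t]` only finitely many grid intervals occur, and Grönwall's inequality
bounds the distance to the limit trajectory by the finitely many control errors there. Fatou's
lemma makes the running cost lower semicontinuous along the subsequence, and the penalty even
converges, by dominated convergence against the summable weights `b_k` (the penalty is bounded on
the compact `U`). So the limit control is a minimizer. Trajectories exist and are unique because
the field is Lipschitz on each grid interval, uniformly over `U`.
-/

/-- Discount weights `b_k = (e^{-λ t_k} - e^{-λ t_{k+1}})/λ = ∫_{I_k} e^{-λ t} dt`. -/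
noncomputable def bcoef (lam : ℝ) (tg : ℕ → ℝ) (k : ℕ) : ℝ :=
  (Real.exp (-lam * tg k) - Real.exp (-lam * tg (k + 1))) / lam

/-- `y` is the trajectory of `ẏ = f₀(y) + Σ_i u_i f_i(y)`, `y(0) = x`, for the piecewise
constant control taking value `v k` on the grid interval `I_k = [t_k, t_{k+1})`. -/
def IsTrajN (d m : ℕ) (f0 : EuclideanSpace ℝ (Fin d) → EuclideanSpace ℝ (Fin d))
    (f : Fin m → EuclideanSpace ℝ (Fin d) → EuclideanSpace ℝ (Fin d))
    (x : EuclideanSpace ℝ (Fin d)) (tg : ℕ → ℝ)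
    (y : ℝ → EuclideanSpace ℝ (Fin d)) (v : ℕ → Fin m → ℝ) : Prop :=
  y 0 = x ∧ ContinuousOn y (Set.Ici 0) ∧
    ∀ k, ∀ t ∈ Set.Ioo (tg k) (tg (k + 1)),
      HasDerivAt y (f0 (y t) + ∑ i, v k i • f i (y t)) t

/-- Cost `J^Δ(x,u) ∈ [0,∞]` of a piecewise constant control `v` with trajectory `y`. -/
noncomputable def JcostE (d m : ℕ) (lam γ p q : ℝ) (yd : EuclideanSpace ℝ (Fin d))
    (tg : ℕ → ℝ) (y : ℝ → EuclideanSpace ℝ (Fin d)) (v : ℕ → Fin m → ℝ) : ENNReal :=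
  (∫⁻ t in Set.Ioi (0 : ℝ), ENNReal.ofReal (Real.exp (-lam * t) * (1 / 2) * ‖y t - yd‖ ^ 2))
    + ENNReal.ofReal (γ * ∑' k, bcoef lam tg k * (∑ i, |v k i| ^ p) ^ (q / p))

open Set Filter Real MeasureTheory
open scoped Topology NNReal ENNReal

section LipschitzODE

variable {E : Type*} [NormedAddCommGroup E] [NormedSpace ℝ E]

theorem LipschitzWith.exists_forall_hasDerivWithinAt_Icc_of_mul_le [CompleteSpace E]
    {v : E → E} {K : ℝ≥0} (hv : LipschitzWith K v) {a b : ℝ} (hab : a ≤ b)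
    (hK : K * (b - a) ≤ 1 / 2) (x₀ : E) :
    ∃ y : ℝ → E, y a = x₀ ∧ ∀ t ∈ Icc a b, HasDerivWithinAt y (v (y t)) (Icc a b) t := by
  -- Picard–Lindelöf on the ball of radius `R` around `x₀`, on which `‖v‖ ≤ C`;
  -- the condition `C (b - a) ≤ R` is where `K (b - a) ≤ 1 / 2` is needed.
  have hba := sub_nonneg.2 hab
  set R : ℝ≥0 := ⟨2 * (b - a) * ‖v x₀‖, by positivity⟩
  have hR : (R : ℝ) = 2 * (b - a) * ‖v x₀‖ := rfl
  set C : ℝ≥0 := ⟨‖v x₀‖ + K * R, by positivity⟩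
  have hC : (C : ℝ) = ‖v x₀‖ + K * R := rfl
  have hbound : ∀ z ∈ Metric.closedBall x₀ R, ‖v z‖ ≤ C := fun z hz => by
    have h := hv.dist_le_mul z x₀
    have := norm_le_norm_add_norm_sub' (v z) (v x₀)
    rw [← dist_eq_norm] at this
    nlinarith [Metric.mem_closedBall.1 hz, K.coe_nonneg]
  have hpl : IsPicardLindelof (fun _ : ℝ => v) (tmin := a) (tmax := b)
      ⟨a, le_rfl, hab⟩ x₀ R 0 C K := by
    refine IsPicardLindelof.of_time_independent hbound hv.lipschitzOnWith ?_
    simp only [NNReal.coe_zero, sub_zero, sub_self, max_eq_left hba, hC, hR]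
    nlinarith [norm_nonneg (v x₀)]
  exact hpl.exists_eq_forall_mem_Icc_hasDerivWithinAt₀

theorem forall_hasDerivWithinAt_Icc_ite {v : E → E} {y z : ℝ → E} {a b c : ℝ}
    (hac : a ≤ c) (hcb : c ≤ b)
    (hy : ∀ t ∈ Icc a c, HasDerivWithinAt y (v (y t)) (Icc a c) t)
    (hz : ∀ t ∈ Icc c b, HasDerivWithinAt z (v (z t)) (Icc c b) t) (hyz : y c = z c) :
    ∀ t ∈ Icc a b, HasDerivWithinAt (fun s => if s ≤ c then y s else z s)
      (v (if t ≤ c then y t else z t)) (Icc a b) t := by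
  set w : ℝ → E := fun s => if s ≤ c then y s else z s
  have extend : ∀ s : Set ℝ, IsClosed s → (∀ t ∈ s, HasDerivWithinAt w (v (w t)) s t) →
      ∀ t, HasDerivWithinAt w (v (w t)) s t := fun s hs h t => by
    by_cases ht : t ∈ s
    · exact h t ht
    · exact HasFDerivWithinAt.of_notMem_closure (by rwa [hs.closure_eq])
  have hwy : EqOn w y (Icc a c) := fun s hs => if_pos hs.2
  have hwz : EqOn w z (Icc c b) := fun s hs => by
    rcases hs.1.eq_or_lt with rfl | h
    · exact (if_pos le_rfl).trans hyz
    · exact if_neg h.not_ge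
  have h₁ := extend _ isClosed_Icc fun t ht => by
    rw [hwy ht]; exact (hy t ht).congr hwy (hwy ht)
  have h₂ := extend _ isClosed_Icc fun t ht => by
    rw [hwz ht]; exact (hz t ht).congr hwz (hwz ht)
  intro t _
  rw [← Icc_union_Icc_eq_Icc hac hcb]
  exact (h₁ t).union (h₂ t)

theorem LipschitzWith.exists_forall_hasDerivWithinAt_Icc [CompleteSpace E]
    {v : E → E} {K : ℝ≥0} (hv : LipschitzWith K v) {a b : ℝ} (hab : a ≤ b) (x₀ : E) :
    ∃ y : ℝ → E, y a = x₀ ∧ ∀ t ∈ Icc a b, HasDerivWithinAt y (v (y t)) (Icc a b) t := by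
  suffices H : ∀ n : ℕ, ∀ a b : ℝ, a ≤ b → K * (b - a) ≤ n / 2 → ∀ x₀ : E,
      ∃ y : ℝ → E, y a = x₀ ∧ ∀ t ∈ Icc a b, HasDerivWithinAt y (v (y t)) (Icc a b) t by
    obtain ⟨n, hn⟩ := exists_nat_ge (2 * (K * (b - a)))
    exact H n a b hab (by linarith) x₀
  intro n
  induction n with
  | zero =>
    exact fun a b hab hK => hv.exists_forall_hasDerivWithinAt_Icc_of_mul_le hab
      (hK.trans (by norm_num))
  | succ n ih =>
    intro a b hab hK x₀
    by_cases hshort : K * (b - a) ≤ 1 / 2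
    · exact hv.exists_forall_hasDerivWithinAt_Icc_of_mul_le hab hshort x₀
    have hKpos : (0 : ℝ) < K := lt_of_not_ge fun h => hshort (by nlinarith [sub_nonneg.2 hab])
    set c := a + 1 / (2 * K)
    have hKc : K * (c - a) = 1 / 2 := by simp only [c]; field_simp; ring
    have hac : a ≤ c := le_add_of_nonneg_right (by positivity)
    have hcb : c ≤ b := by nlinarith
    obtain ⟨y, hya, hy⟩ := hv.exists_forall_hasDerivWithinAt_Icc_of_mul_le hac hKc.le x₀
    obtain ⟨z, hzc, hz⟩ := ih c b hcb (by push_cast at hK; nlinarith) (y c)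
    exact ⟨fun s => if s ≤ c then y s else z s, by simp [hac, hya],
      forall_hasDerivWithinAt_Icc_ite hac hcb hy hz hzc.symm⟩

theorem hasDerivWithinAt_Ici_of_forall_hasDerivAt_Ioo {y F : ℝ → E} {a b : ℝ} (hab : a < b)
    (hy : ContinuousWithinAt y (Ioi a) a) (hF : ContinuousWithinAt F (Ioi a) a)
    (hderiv : ∀ t ∈ Ioo a b, HasDerivAt y (F t) t) : HasDerivWithinAt y (F a) (Ici a) a := by
  refine hasDerivWithinAt_Ici_of_tendsto_deriv
    (fun t ht => (hderiv t ht).differentiableAt.differentiableWithinAt)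
    (hy.mono Ioo_subset_Ioi_self) (Ioo_mem_nhdsGT hab) (hF.tendsto.congr' ?_)
  filter_upwards [Ioo_mem_nhdsGT hab] with t ht using (hderiv t ht).deriv.symm

end LipschitzODE

structure IsTimeGrid (tg : ℕ → ℝ) : Prop where
  zero : tg 0 = 0
  strictMono : StrictMono tg
  tendsto_atTop : Tendsto tg atTop atTop

/-- The `k` with `t ∈ [t_k, t_{k+1})`, and `0` if there is none. -/
noncomputable def gridIndex (tg : ℕ → ℝ) (t : ℝ) : ℕ := sInf {k | t < tg (k + 1)}

namespace IsTimeGrid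

variable {tg : ℕ → ℝ} {t : ℝ} {k : ℕ}

theorem gridIndex_eq_of_mem_Ico (hG : IsTimeGrid tg) (ht : t ∈ Ico (tg k) (tg (k + 1))) :
    gridIndex tg t = k :=
  le_antisymm (Nat.sInf_le ht.2) <| le_csInf ⟨k, ht.2⟩ fun _ hj =>
    Nat.lt_succ_iff.1 (hG.strictMono.lt_iff_lt.1 (ht.1.trans_lt hj))

theorem mem_Ico_gridIndex (hG : IsTimeGrid tg) (ht : 0 ≤ t) :
    t ∈ Ico (tg (gridIndex tg t)) (tg (gridIndex tg t + 1)) := by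
  have hne : {k | t < tg (k + 1)}.Nonempty :=
    ((hG.tendsto_atTop.comp (tendsto_add_atTop_nat 1)).eventually_gt_atTop t).exists
  refine ⟨?_, Nat.sInf_mem hne⟩
  rcases hk : gridIndex tg t with _ | j
  · rwa [hG.zero]
  · exact not_lt.1 (Nat.notMem_of_lt_sInf (by omega : j < gridIndex tg t))

theorem gridIndex_mono (hG : IsTimeGrid tg) : MonotoneOn (gridIndex tg) (Ici 0) :=
  fun _ hs _ ht hst => Nat.lt_succ_iff.1 <| hG.strictMono.lt_iff_lt.1 <|
    (hG.mem_Ico_gridIndex hs).1.trans_lt (hst.trans_lt (hG.mem_Ico_gridIndex ht).2)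

theorem continuousOn_Ici {X : Type*} [TopologicalSpace X] {y : ℝ → X} (hG : IsTimeGrid tg)
    (hy : ∀ k, ContinuousOn y (Icc (tg k) (tg (k + 1)))) : ContinuousOn y (Ici 0) := by
  have hIcc : ∀ n, ContinuousOn y (Icc 0 (tg n)) := by
    intro n
    induction n with
    | zero => simp [hG.zero, continuousOn_singleton]
    | succ n ih =>
      have h0n : 0 ≤ tg n := hG.zero ▸ hG.strictMono.monotone n.zero_le
      rw [← Icc_union_Icc_eq_Icc h0n (hG.strictMono n.lt_succ_self).le]
      exact ih.union_of_isClosed (hy n) isClosed_Icc isClosed_Icc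
  intro t ht
  obtain ⟨n, hn⟩ := (hG.tendsto_atTop.eventually_gt_atTop t).exists
  refine ((hIcc n).continuousWithinAt ⟨ht, hn.le⟩).mono_of_mem_nhdsWithin ?_
  rw [← Ici_inter_Iic]
  exact inter_mem_nhdsWithin _ (Iic_mem_nhds hn)

end IsTimeGrid

theorem LipschitzWith.norm_le_mul_norm_add {E F : Type*} [SeminormedAddCommGroup E]
    [SeminormedAddCommGroup F] {g : E → F} {K : ℝ≥0} (hg : LipschitzWith K g) (e : E) :
    ‖g e‖ ≤ K * ‖e‖ + ‖g 0‖ := by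
  have h := hg.dist_le_mul e 0
  rw [dist_zero_right, dist_eq_norm] at h
  linarith [norm_le_norm_add_norm_sub' (g e) (g 0)]

section ControlledField

variable {E ι : Type*} [NormedAddCommGroup E] [NormedSpace ℝ E] [Fintype ι]
  {f0 : E → E} {f : ι → E → E}

def ctrlField (f0 : E → E) (f : ι → E → E) (w : ι → ℝ) (e : E) : E :=
  f0 e + ∑ i, w i • f i e

theorem lipschitzWith_ctrlField {L : ℝ≥0} (hf0 : LipschitzWith L f0)
    (hf : ∀ i, LipschitzWith L (f i)) (w : ι → ℝ) :
    LipschitzWith (L * (1 + ∑ i, ‖w i‖₊)) (ctrlField f0 f w) := by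
  refine LipschitzWith.of_dist_le_mul fun e₁ e₂ => ?_
  have hsmul : ∀ i, dist (w i • f i e₁) (w i • f i e₂) ≤ ‖w i‖₊ * (L * dist e₁ e₂) :=
    fun i => by
    rw [dist_smul₀]
    exact mul_le_mul_of_nonneg_left ((hf i).dist_le_mul e₁ e₂) (norm_nonneg _)
  calc dist (ctrlField f0 f w e₁) (ctrlField f0 f w e₂)
      ≤ dist (f0 e₁) (f0 e₂) + ∑ i, dist (w i • f i e₁) (w i • f i e₂) :=
        (dist_add_add_le _ _ _ _).trans (add_le_add le_rfl (dist_sum_sum_le _ _ _))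
    _ ≤ L * dist e₁ e₂ + ∑ i, ‖w i‖₊ * (L * dist e₁ e₂) :=
        add_le_add (hf0.dist_le_mul e₁ e₂) (Finset.sum_le_sum fun i _ => hsmul i)
    _ = ↑(L * (1 + ∑ i, ‖w i‖₊)) * dist e₁ e₂ := by
        push_cast; rw [← Finset.sum_mul]; ring

theorem norm_ctrlField_sub_le (w w' : ι → ℝ) (e : E) :
    ‖ctrlField f0 f w e - ctrlField f0 f w' e‖ ≤ ‖w - w'‖ * ∑ i, ‖f i e‖ := by
  simp only [ctrlField, add_sub_add_left_eq_sub, ← Finset.sum_sub_distrib, ← sub_smul,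
    Finset.mul_sum]
  refine (norm_sum_le _ _).trans (Finset.sum_le_sum fun i _ => ?_)
  rw [norm_smul]
  exact mul_le_mul_of_nonneg_right (norm_le_pi_norm (w - w') i) (norm_nonneg _)

theorem IsCompact.exists_lipschitzWith_ctrlField {L : ℝ≥0} (hf0 : LipschitzWith L f0)
    (hf : ∀ i, LipschitzWith L (f i)) {U : Set (ι → ℝ)} (hU : IsCompact U) :
    ∃ K : ℝ≥0, ∀ w ∈ U, LipschitzWith K (ctrlField f0 f w) := by
  obtain ⟨K, hK⟩ := hU.bddAbove_image
    (f := fun w : ι → ℝ => L * (1 + ∑ i, ‖w i‖₊)) (by fun_prop)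
  exact ⟨K, fun w hw =>
    (lipschitzWith_ctrlField hf0 hf w).weaken (hK (mem_image_of_mem _ hw))⟩

theorem IsCompact.exists_norm_ctrlField_zero_le (f0 : E → E) (f : ι → E → E)
    {U : Set (ι → ℝ)} (hU : IsCompact U) : ∃ C, ∀ w ∈ U, ‖ctrlField f0 f w 0‖ ≤ C :=
  hU.exists_bound_of_continuousOn (by unfold ctrlField; fun_prop)

end ControlledField

section Trajectories

variable {d m : ℕ} {f0 : EuclideanSpace ℝ (Fin d) → EuclideanSpace ℝ (Fin d)}
  {f : Fin m → EuclideanSpace ℝ (Fin d) → EuclideanSpace ℝ (Fin d)}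
  {x : EuclideanSpace ℝ (Fin d)}
  {tg : ℕ → ℝ} {y z : ℝ → EuclideanSpace ℝ (Fin d)} {v : ℕ → Fin m → ℝ} {K : ℝ≥0}

/-- The piecewise ODE as `ẏ = F(t, y)` from the right on all of `[0, ∞)` (at a grid point `t_k`
the derivative is only one-sided): the form used by `ODE_solution_unique` and the Grönwall
estimates. -/
theorem IsTrajN.hasDerivWithinAt_Ici (hy : IsTrajN d m f0 f x tg y v) (hG : IsTimeGrid tg)
    (hv : ∀ k, Continuous (ctrlField f0 f (v k))) {t : ℝ} (ht : 0 ≤ t) :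
    HasDerivWithinAt y (ctrlField f0 f (v (gridIndex tg t)) (y t)) (Ici t) t := by
  obtain ⟨hkt, htk⟩ := hG.mem_Ico_gridIndex ht
  rcases hkt.eq_or_lt with heq | hlt
  · have hyc : ContinuousWithinAt y (Ioi t) t :=
      (hy.2.1 t ht).mono (Ioi_subset_Ici_self.trans (Ici_subset_Ici.2 ht))
    refine hasDerivWithinAt_Ici_of_forall_hasDerivAt_Ioo htk hyc
      ((hv _).continuousAt.comp_continuousWithinAt hyc) fun s hs => ?_
    exact hy.2.2 _ s (by rwa [heq])
  · exact (hy.2.2 _ t ⟨hlt, htk⟩).hasDerivWithinAt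

theorem IsTrajN.eqOn (hy : IsTrajN d m f0 f x tg y v) (hz : IsTrajN d m f0 f x tg z v)
    (hG : IsTimeGrid tg) (hv : ∀ k, LipschitzWith K (ctrlField f0 f (v k))) :
    EqOn y z (Ici 0) := fun _ ht =>
  ODE_solution_unique (v := fun s => ctrlField f0 f (v (gridIndex tg s))) (fun _ => hv _)
    (hy.2.1.mono Icc_subset_Ici_self)
    (fun _ hs => hy.hasDerivWithinAt_Ici hG (fun k => (hv k).continuous) hs.1)
    (hz.2.1.mono Icc_subset_Ici_self)
    (fun _ hs => hz.hasDerivWithinAt_Ici hG (fun k => (hv k).continuous) hs.1)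
    (hy.1.trans hz.1.symm) ⟨ht, le_rfl⟩

/-- The trajectory is assembled from solutions on the closed grid intervals, each started at the
end point of the previous one. -/
theorem exists_isTrajN {L : ℝ≥0} (hf0 : LipschitzWith L f0) (hf : ∀ i, LipschitzWith L (f i))
    (hG : IsTimeGrid tg) (x : EuclideanSpace ℝ (Fin d)) (v : ℕ → Fin m → ℝ) :
    ∃ y, IsTrajN d m f0 f x tg y v := by
  choose sol hsol₀ hsol using fun k e =>
    (lipschitzWith_ctrlField hf0 hf (v k)).exists_forall_hasDerivWithinAt_Icc
      (hG.strictMono k.lt_succ_self).le e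
  let state : ℕ → EuclideanSpace ℝ (Fin d) :=
    fun k => Nat.rec x (fun k e => sol k e (tg (k + 1))) k
  let y : ℝ → EuclideanSpace ℝ (Fin d) :=
    fun t => sol (gridIndex tg t) (state (gridIndex tg t)) t
  have hpiece : ∀ k, EqOn y (sol k (state k)) (Icc (tg k) (tg (k + 1))) := by
    intro k t ht
    rcases ht.2.lt_or_eq with hlt | rfl
    · simp only [y, hG.gridIndex_eq_of_mem_Ico ⟨ht.1, hlt⟩]
    · simp only [y, hG.gridIndex_eq_of_mem_Ico ⟨le_rfl, hG.strictMono (k + 1).lt_succ_self⟩,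
        hsol₀]
      rfl
  refine ⟨y, ?_, hG.continuousOn_Ici fun k => ?_, fun k t ht => ?_⟩
  · rw [hpiece 0 ⟨hG.zero.le, hG.zero ▸ (hG.strictMono zero_lt_one).le⟩, ← hG.zero]
    exact hsol₀ 0 x
  · exact ContinuousOn.congr (fun t ht => (hsol k _ t ht).continuousWithinAt) (hpiece k)
  · have hd := ((hsol k (state k) t (Ioo_subset_Icc_self ht)).hasDerivAt
      (Icc_mem_nhds ht.1 ht.2)).congr_of_eventuallyEq
      (eventuallyEq_of_mem (Icc_mem_nhds ht.1 ht.2) (hpiece k))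
    rwa [← hpiece k (Ioo_subset_Icc_self ht)] at hd

theorem IsTrajN.norm_le_gronwallBound (hy : IsTrajN d m f0 f x tg y v) (hG : IsTimeGrid tg)
    (hv : ∀ k, LipschitzWith K (ctrlField f0 f (v k))) {C : ℝ}
    (hC : ∀ k, ‖ctrlField f0 f (v k) 0‖ ≤ C) {t : ℝ} (ht : 0 ≤ t) :
    ‖y t‖ ≤ gronwallBound ‖x‖ K C t := by
  have h := norm_le_gronwallBound_of_norm_deriv_right_le (hy.2.1.mono Icc_subset_Ici_self)
    (fun _ hs => hy.hasDerivWithinAt_Ici hG (fun k => (hv k).continuous) hs.1) (by rw [hy.1])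
    (fun s _ => ((hv _).norm_le_mul_norm_add (y s)).trans (add_le_add le_rfl (hC _)))
    t ⟨ht, le_rfl⟩
  rwa [sub_zero] at h

/-- Continuous dependence on the control: Grönwall's estimate against the limit trajectory, with
an error that only involves the finitely many grid intervals meeting `[0, t]`. -/
theorem tendsto_apply_of_isTrajN (hG : IsTimeGrid tg) (hf : ∀ i, Continuous (f i))
    {U : Set (Fin m → ℝ)} (hK : ∀ w ∈ U, LipschitzWith K (ctrlField f0 f w)) {C : ℝ}
    (hC : ∀ w ∈ U, ‖ctrlField f0 f w 0‖ ≤ C) {w : ℕ → ℕ → Fin m → ℝ}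
    {ys : ℕ → ℝ → EuclideanSpace ℝ (Fin d)} (hw : ∀ j k, w j k ∈ U)
    (hys : ∀ j, IsTrajN d m f0 f x tg (ys j) (w j)) (hv : ∀ k, v k ∈ U)
    (hy : IsTrajN d m f0 f x tg y v) (hconv : ∀ k, Tendsto (fun j => w j k) atTop (𝓝 (v k)))
    {t : ℝ} (ht : 0 ≤ t) : Tendsto (fun j => ys j t) atTop (𝓝 (y t)) := by
  have hC0 : 0 ≤ C := (norm_nonneg _).trans (hC _ (hw 0 0))
  set R := gronwallBound ‖x‖ K C t
  have hR : ∀ j, ∀ s ∈ Icc 0 t, ‖ys j s‖ ≤ R := fun j s hs =>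
    ((hys j).norm_le_gronwallBound hG (fun k => hK _ (hw j k)) (fun k => hC _ (hw j k))
      hs.1).trans (gronwallBound_mono (norm_nonneg x) hC0 K.coe_nonneg hs.2)
  obtain ⟨F, hF⟩ := (isCompact_closedBall (0 : EuclideanSpace ℝ (Fin d)) R).bddAbove_image
    (f := fun e => ∑ i, ‖f i e‖) (by fun_prop)
  set N := gridIndex tg t + 1
  set ε : ℕ → ℝ := fun j => (∑ k ∈ Finset.range N, ‖w j k - v k‖) * F
  have hfield : ∀ j, ∀ s ∈ Ico 0 t, dist (ctrlField f0 f (w j (gridIndex tg s)) (ys j s))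
      (ctrlField f0 f (v (gridIndex tg s)) (ys j s)) ≤ ε j := fun j s hs => by
    rw [dist_eq_norm]
    refine (norm_ctrlField_sub_le _ _ _).trans
      (mul_le_mul ?_ ?_ (by positivity) (by positivity))
    · exact Finset.single_le_sum (f := fun k => ‖w j k - v k‖) (fun _ _ => norm_nonneg _)
        (Finset.mem_range.2 (Nat.lt_succ_of_le (hG.gridIndex_mono hs.1 ht hs.2.le)))
    · exact hF (mem_image_of_mem _
        (mem_closedBall_zero_iff.2 (hR j s (Ico_subset_Icc_self hs))))
  have hdist : ∀ j, dist (ys j t) (y t) ≤ gronwallBound 0 K (ε j) t := fun j => by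
    have h := dist_le_of_approx_trajectories_ODE
      (v := fun s => ctrlField f0 f (v (gridIndex tg s))) (fun _ => hK _ (hv _))
      ((hys j).2.1.mono Icc_subset_Ici_self)
      (fun _ hs => (hys j).hasDerivWithinAt_Ici hG (fun k => (hK _ (hw j k)).continuous) hs.1)
      (hfield j) (hy.2.1.mono Icc_subset_Ici_self)
      (fun _ hs => hy.hasDerivWithinAt_Ici hG (fun k => (hK _ (hv k)).continuous) hs.1)
      (fun _ _ => (dist_self _).le) (by rw [(hys j).1, hy.1, dist_self]) t ⟨ht, le_rfl⟩
    rwa [add_zero, sub_zero] at h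
  have hε : Tendsto ε atTop (𝓝 0) := by
    have := (tendsto_finsetSum (Finset.range N) fun k _ =>
      ((hconv k).sub_const (v k)).norm).mul_const F
    simpa using this
  have hbound : Tendsto (fun j => gronwallBound 0 K (ε j) t) atTop (𝓝 0) := by
    simpa [Function.comp_def, gronwallBound_ε0_δ0] using
      ((gronwallBound_continuous_ε 0 K t).tendsto 0).comp hε
  exact tendsto_iff_dist_tendsto_zero.2 (squeeze_zero (fun _ => dist_nonneg) hdist hbound)

end Trajectories

section Cost

variable {lam p q : ℝ} {tg : ℕ → ℝ}

theorem bcoef_nonneg (hlam : 0 < lam) (htg : Monotone tg) (k : ℕ) : 0 ≤ bcoef lam tg k :=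
  div_nonneg (sub_nonneg.2 (exp_le_exp.2 (by nlinarith [htg k.le_succ]))) hlam.le

theorem summable_bcoef (hlam : 0 < lam) (htg : Monotone tg) : Summable (bcoef lam tg) := by
  refine summable_of_sum_range_le (c := exp (-lam * tg 0) / lam) (bcoef_nonneg hlam htg)
    fun n => ?_
  simp only [bcoef]
  rw [← Finset.sum_div, Finset.sum_range_sub' (f := fun k => exp (-lam * tg k))]
  gcongr
  exact sub_le_self _ (exp_pos _).le

theorem continuous_penalty {ι : Type*} [Fintype ι] (hp : 0 ≤ p) (hq : 0 ≤ q) :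
    Continuous fun w : ι → ℝ => (∑ i, |w i| ^ p) ^ (q / p) :=
  (continuous_finsetSum _ fun i _ =>
    (continuous_apply i).abs.rpow_const fun _ => Or.inr hp).rpow_const
      fun _ => Or.inr (div_nonneg hq hp)

theorem tendsto_tsum_bcoef_mul_penalty {ι : Type*} [Fintype ι] {U : Set (ι → ℝ)}
    (hU : IsCompact U) (hlam : 0 < lam) (htg : Monotone tg) (hp : 0 ≤ p) (hq : 0 ≤ q)
    {w : ℕ → ℕ → ι → ℝ} {v : ℕ → ι → ℝ} (hw : ∀ j k, w j k ∈ U)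
    (hconv : ∀ k, Tendsto (fun j => w j k) atTop (𝓝 (v k))) :
    Tendsto (fun j => ∑' k, bcoef lam tg k * (∑ i, |w j k i| ^ p) ^ (q / p)) atTop
      (𝓝 (∑' k, bcoef lam tg k * (∑ i, |v k i| ^ p) ^ (q / p))) := by
  have hP := continuous_penalty (ι := ι) hp hq
  obtain ⟨M, hM⟩ := hU.exists_bound_of_continuousOn hP.continuousOn
  refine tendsto_tsum_of_dominated_convergence ((summable_bcoef hlam htg).mul_right M)
    (fun k => ((hP.tendsto _).comp (hconv k)).const_mul _) (Eventually.of_forall fun j k => ?_)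
  rw [norm_mul, Real.norm_of_nonneg (bcoef_nonneg hlam htg k)]
  exact mul_le_mul_of_nonneg_left (hM _ (hw j k)) (bcoef_nonneg hlam htg k)

theorem lintegral_discounted_le_liminf {E : Type*} [NormedAddCommGroup E] (yd : E)
    {ys : ℕ → ℝ → E} {y : ℝ → E} (hys : ∀ j, ContinuousOn (ys j) (Ici 0))
    (hconv : ∀ t, 0 ≤ t → Tendsto (fun j => ys j t) atTop (𝓝 (y t))) :
    ∫⁻ t in Ioi 0, ENNReal.ofReal (exp (-lam * t) * (1 / 2) * ‖y t - yd‖ ^ 2) ≤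
      liminf (fun j => ∫⁻ t in Ioi 0,
        ENNReal.ofReal (exp (-lam * t) * (1 / 2) * ‖ys j t - yd‖ ^ 2)) atTop := by
  have hmeas : ∀ j, AEMeasurable (fun t => ENNReal.ofReal
      (exp (-lam * t) * (1 / 2) * ‖ys j t - yd‖ ^ 2)) (volume.restrict (Ioi 0)) := fun j => by
    have := (hys j).mono Ioi_subset_Ici_self
    exact (ENNReal.continuous_ofReal.comp_continuousOn (by fun_prop)).aemeasurable
      measurableSet_Ioi
  calc _ = ∫⁻ t in Ioi 0, liminf (fun j => ENNReal.ofReal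
          (exp (-lam * t) * (1 / 2) * ‖ys j t - yd‖ ^ 2)) atTop :=
        setLIntegral_congr_fun measurableSet_Ioi fun t ht =>
          ((ENNReal.continuous_ofReal.tendsto _).comp
            ((((hconv t (le_of_lt ht)).sub_const yd).norm.pow 2).const_mul _)).liminf_eq.symm
    _ ≤ _ := lintegral_liminf_le' hmeas

theorem ENNReal.liminf_add_liminf_le (u v : ℕ → ℝ≥0∞) :
    liminf u atTop + liminf v atTop ≤ liminf (u + v) atTop := by
  simp only [liminf_eq_iSup_iInf_of_nat]
  rw [ENNReal.iSup_add_iSup_of_monotone (fun _ _ h => biInf_mono fun _ => h.trans)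
    (fun _ _ h => biInf_mono fun _ => h.trans)]
  exact iSup_mono fun n => le_iInf₂ fun i hi => add_le_add (iInf₂_le i hi) (iInf₂_le i hi)

end Cost

section DirectMethod

variable {d m : ℕ} {lam γ p q : ℝ} {yd : EuclideanSpace ℝ (Fin d)} {tg : ℕ → ℝ}

theorem JcostE_congr {y z : ℝ → EuclideanSpace ℝ (Fin d)} (h : EqOn y z (Ioi 0))
    (v : ℕ → Fin m → ℝ) : JcostE d m lam γ p q yd tg y v = JcostE d m lam γ p q yd tg z v := by
  unfold JcostE
  rw [setLIntegral_congr_fun measurableSet_Ioi fun t ht => by rw [h ht]]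

theorem JcostE_le_liminf {U : Set (Fin m → ℝ)} (hU : IsCompact U) (hlam : 0 < lam)
    (htg : Monotone tg) (hp : 0 ≤ p) (hq : 0 ≤ q) {w : ℕ → ℕ → Fin m → ℝ} {v : ℕ → Fin m → ℝ}
    {ys : ℕ → ℝ → EuclideanSpace ℝ (Fin d)} {y : ℝ → EuclideanSpace ℝ (Fin d)}
    (hw : ∀ j k, w j k ∈ U) (hconv : ∀ k, Tendsto (fun j => w j k) atTop (𝓝 (v k)))
    (hys : ∀ j, ContinuousOn (ys j) (Ici 0))
    (hyconv : ∀ t, 0 ≤ t → Tendsto (fun j => ys j t) atTop (𝓝 (y t))) :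
    JcostE d m lam γ p q yd tg y v ≤
      liminf (fun j => JcostE d m lam γ p q yd tg (ys j) (w j)) atTop := by
  have hpenalty := (ENNReal.continuous_ofReal.tendsto _).comp
    ((tendsto_tsum_bcoef_mul_penalty hU hlam htg hp hq hw hconv).const_mul γ)
  exact (add_le_add (lintegral_discounted_le_liminf yd hys hyconv) hpenalty.liminf_eq.ge).trans
    (ENNReal.liminf_add_liminf_le _ _)

theorem IsSeqCompact.exists_isMinOn_of_le_liminf {X β : Type*} [TopologicalSpace X]
    [CompleteLinearOrder β] [TopologicalSpace β] [OrderTopology β] [FirstCountableTopology β]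
    {S : Set X} {Φ : X → β} (hS : IsSeqCompact S) (hne : S.Nonempty)
    (hΦ : ∀ ⦃u : ℕ → X⦄ ⦃x : X⦄, (∀ n, u n ∈ S) → x ∈ S → Tendsto u atTop (𝓝 x) →
      Φ x ≤ liminf (Φ ∘ u) atTop) :
    ∃ x ∈ S, IsMinOn Φ S x := by
  obtain ⟨c, -, hc, hcS⟩ := exists_seq_tendsto_sInf (hne.image Φ) (OrderBot.bddBelow _)
  choose u huS hu using hcS
  obtain ⟨x, hxS, φ, hφ, hux⟩ := hS huS
  refine ⟨x, hxS, fun z hz => ?_⟩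
  calc Φ x ≤ liminf (Φ ∘ (u ∘ φ)) atTop := hΦ (fun n => huS _) hxS hux
    _ = sInf (Φ '' S) := by
        refine (hc.comp hφ.tendsto_atTop).liminf_eq ▸ ?_
        simp only [Function.comp_def, hu]
    _ ≤ Φ z := sInf_le (mem_image_of_mem Φ hz)

end DirectMethod

theorem exists_piecewise_constant_minimizer_general
    (d m : ℕ) (p q lam γ : ℝ) (hp0 : 0 < p) (hpq : p ≤ q)
    (hlam : 0 < lam)
    (yd x : EuclideanSpace ℝ (Fin d))
    (U : Set (Fin m → ℝ)) (hUc : IsCompact U) (hUne : U.Nonempty)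
    (f0 : EuclideanSpace ℝ (Fin d) → EuclideanSpace ℝ (Fin d))
    (f : Fin m → EuclideanSpace ℝ (Fin d) → EuclideanSpace ℝ (Fin d))
    (L : NNReal) (hf0 : LipschitzWith L f0) (hf : ∀ i, LipschitzWith L (f i))
    (tg : ℕ → ℝ) (htg0 : tg 0 = 0) (htgmono : StrictMono tg)
    (htginf : Filter.Tendsto tg Filter.atTop Filter.atTop) :
    ∃ (ubar : ℕ → Fin m → ℝ) (ybar : ℝ → EuclideanSpace ℝ (Fin d)),
      (∀ k, ubar k ∈ U) ∧ IsTrajN d m f0 f x tg ybar ubar ∧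
      ∀ (vseq : ℕ → Fin m → ℝ), (∀ k, vseq k ∈ U) →
        ∀ (yv : ℝ → EuclideanSpace ℝ (Fin d)), IsTrajN d m f0 f x tg yv vseq →
          JcostE d m lam γ p q yd tg ybar ubar ≤ JcostE d m lam γ p q yd tg yv vseq := by
  have hG : IsTimeGrid tg := ⟨htg0, htgmono, htginf⟩
  obtain ⟨K, hK⟩ := hUc.exists_lipschitzWith_ctrlField hf0 hf
  obtain ⟨C, hC⟩ := hUc.exists_norm_ctrlField_zero_le f0 f
  choose Y hY using exists_isTrajN hf0 hf hG x
  set S := univ.pi fun _ : ℕ => U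
  have hlsc : ∀ ⦃w : ℕ → ℕ → Fin m → ℝ⦄ ⦃v⦄, (∀ j, w j ∈ S) → v ∈ S →
      Tendsto w atTop (𝓝 v) → JcostE d m lam γ p q yd tg (Y v) v ≤
        liminf (fun j => JcostE d m lam γ p q yd tg (Y (w j)) (w j)) atTop := by
    intro w v hw hv hconv
    simp only [S, mem_univ_pi] at hw hv
    have hconv' := tendsto_pi_nhds.1 hconv
    exact JcostE_le_liminf hUc hlam htgmono.monotone hp0.le (hp0.le.trans hpq) hw hconv'
      (fun j => (hY (w j)).2.1) fun t ht => tendsto_apply_of_isTrajN hG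
        (fun i => (hf i).continuous) hK hC hw (fun j => hY (w j)) hv (hY v) hconv' ht
  obtain ⟨ubar, hubar, hmin⟩ := (isCompact_univ_pi fun _ => hUc).isSeqCompact
    |>.exists_isMinOn_of_le_liminf ⟨fun _ => hUne.some, fun _ _ => hUne.some_mem⟩ hlsc
  refine ⟨ubar, Y ubar, mem_univ_pi.1 hubar, hY ubar, fun v hv yv hyv => ?_⟩
  rw [JcostE_congr ((hyv.eqOn (hY v) hG fun k => hK _ (hv k)).mono Ioi_subset_Ici_self)]
  exact hmin (mem_univ_pi.2 hv)

/-- Theorem 3.2: existence of a minimizer of the time-discretized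
infinite horizon problem among piecewise constant controls with values in `U`. -/
theorem exists_piecewise_constant_minimizer
    (d m : ℕ) (p q lam γ : ℝ) (hp0 : 0 < p) (hp1 : p < 1) (hpq : p ≤ q) (hq1 : q ≤ 1)
    (hlam : 0 < lam) (hγ : 0 < γ)
    (yd x : EuclideanSpace ℝ (Fin d))
    (U : Set (Fin m → ℝ)) (hUc : IsCompact U) (hUconv : Convex ℝ U) (hUne : U.Nonempty)
    (f0 : EuclideanSpace ℝ (Fin d) → EuclideanSpace ℝ (Fin d))
    (f : Fin m → EuclideanSpace ℝ (Fin d) → EuclideanSpace ℝ (Fin d))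
    (L : NNReal) (hf0 : LipschitzWith L f0) (hf : ∀ i, LipschitzWith L (f i))
    (tg : ℕ → ℝ) (htg0 : tg 0 = 0) (htgmono : StrictMono tg)
    (htginf : Filter.Tendsto tg Filter.atTop Filter.atTop) :
    ∃ (ubar : ℕ → Fin m → ℝ) (ybar : ℝ → EuclideanSpace ℝ (Fin d)),
      (∀ k, ubar k ∈ U) ∧ IsTrajN d m f0 f x tg ybar ubar ∧
      ∀ (vseq : ℕ → Fin m → ℝ), (∀ k, vseq k ∈ U) →
        ∀ (yv : ℝ → EuclideanSpace ℝ (Fin d)), IsTrajN d m f0 f x tg yv vseq →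
          JcostE d m lam γ p q yd tg ybar ubar ≤ JcostE d m lam γ p q yd tg yv vseq :=
  exists_piecewise_constant_minimizer_general d m p q lam γ hp0 hpq hlam yd x U hUc hUne f0 f L hf0
    hf tg htg0 htgmono htginf
end
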